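/- arXiv:2308.01767 — 2 statements merged into one kernel-verified Lean document; each statement's English description precedes it below -/
import Mathlib

section
/- For every n ≥ 1, the set eNNC_{2n}, partially ordered by refinement (P ≤ Q if and only if every block of P is contained in some block of Q), is a lattice: any two elements have a least upper bound and a greatest lower bound in eNNC_{2n}. -/
/-! Non-exhaustive non-crossing partitions. For `m ≥ 1` we write `[m] = {1, …, m}`,
realised as `Set.Icc 1 m ⊆ ℕ`. -/

/-- `P` is a non-exhaustive non-crossing partition of `[m]`: a collection of pairwise
disjoint nonempty subsets of `[m]` (blocks) such that whenever `i < k < j < l` with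
`i, j` in a block `B` and `k, l` in a block `B'`, then `B = B'`. -/
def IsNNC (m : ℕ) (P : Set (Set ℕ)) : Prop :=
  (∀ B ∈ P, B.Nonempty ∧ B ⊆ Set.Icc 1 m) ∧
  (∀ B ∈ P, ∀ B' ∈ P, B ≠ B' → Disjoint B B') ∧
  (∀ B ∈ P, ∀ B' ∈ P, ∀ i k j l : ℕ, i < k → k < j → j < l →
    i ∈ B → j ∈ B → k ∈ B' → l ∈ B' → B = B')

/-- `P` is an even-exclusive non-exhaustive non-crossing partition of `[m]`: an element
of `NNC_m` having no singleton block `{i}` with `i` even. -/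
def IsENNC (m : ℕ) (P : Set (Set ℕ)) : Prop :=
  IsNNC m P ∧ ∀ i : ℕ, Even i → ({i} : Set ℕ) ∉ P

/-- `P` refines `Q`: every block of `P` is contained in some block of `Q`. -/
def Refines (P Q : Set (Set ℕ)) : Prop :=
  ∀ B ∈ P, ∃ B' ∈ Q, B ⊆ B'

/-! The meet is explicit: the nonempty intersections `B ∩ B'` of a block of `P` with a block
of `Q`, discarding the even singletons. Joins then come for free: `eNNC_m` is finite, has the
top element `{[m]}`, and the common upper bounds of `P` and `Q` in it are closed under this
meet, so a minimal common upper bound lies below all the others. -/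

theorem Refines.refl (P : Set (Set ℕ)) : Refines P P :=
  fun B hB => ⟨B, hB, subset_rfl⟩

theorem Refines.trans {P Q R : Set (Set ℕ)} (hPQ : Refines P Q) (hQR : Refines Q R) :
    Refines P R := by
  intro B hB
  obtain ⟨C, hC, hBC⟩ := hPQ B hB
  obtain ⟨D, hD, hCD⟩ := hQR C hC
  exact ⟨D, hD, hBC.trans hCD⟩

/-- `Set (Set ℕ)` preordered by refinement rather than by inclusion. -/
def Refinement : Type := Set (Set ℕ)

instance : Preorder Refinement where
  le := Refines
  le_refl := Refines.refl
  le_trans _ _ _ := Refines.trans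

theorem setOf_isNNC_finite (m : ℕ) : {P | IsNNC m P}.Finite :=
  (Set.finite_Icc 1 m).powerset.powerset.subset fun _ hP _ hB => (hP.1 _ hB).2

theorem IsNNC.refines_Icc {m : ℕ} {P : Set (Set ℕ)} (hP : IsNNC m P) :
    Refines P {Set.Icc 1 m} :=
  fun B hB => ⟨_, rfl, (hP.1 B hB).2⟩

theorem isENNC_singleton_Icc {m : ℕ} (hm : 1 ≤ m) : IsENNC m {Set.Icc 1 m} := by
  refine ⟨⟨?_, ?_, ?_⟩, ?_⟩
  · rintro B rfl
    exact ⟨⟨1, le_rfl, hm⟩, subset_rfl⟩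
  · rintro B rfl B' rfl h
    exact absurd rfl h
  · rintro B rfl B' rfl - - - - - - - - - - -
    rfl
  · intro i hi hmem
    have h1 : 1 ∈ ({i} : Set ℕ) := (Set.mem_singleton_iff.mp hmem).symm ▸ ⟨le_rfl, hm⟩
    rw [← Set.mem_singleton_iff.mp h1] at hi
    exact Nat.not_even_one hi

/-- Even singletons `B ∩ B' = {i}` are discarded so as to stay in `eNNC_m`; no block of a
common refinement of `P` and `Q` in `eNNC_m` lies in one, so nothing is lost. -/
def interBlocks (P Q : Set (Set ℕ)) : Set (Set ℕ) :=
  {S | S.Nonempty ∧ (∀ i : ℕ, Even i → S ≠ {i}) ∧ ∃ B ∈ P, ∃ B' ∈ Q, S = B ∩ B'}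

theorem isENNC_interBlocks {m : ℕ} {P Q : Set (Set ℕ)} (hP : IsENNC m P) (hQ : IsENNC m Q) :
    IsENNC m (interBlocks P Q) := by
  refine ⟨⟨?_, ?_, ?_⟩, fun i hi hmem => hmem.2.1 i hi rfl⟩
  · rintro S ⟨hne, -, B, hB, B', -, rfl⟩
    exact ⟨hne, Set.inter_subset_left.trans (hP.1.1 B hB).2⟩
  · rintro S ⟨-, -, B, hB, B', hB', rfl⟩ T ⟨-, -, C, hC, C', hC', rfl⟩ hne
    refine Set.disjoint_left.mpr fun x hxS hxT => hne ?_
    have hBC : B = C := by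
      by_contra h
      exact Set.disjoint_left.mp (hP.1.2.1 B hB C hC h) hxS.1 hxT.1
    have hBC' : B' = C' := by
      by_contra h
      exact Set.disjoint_left.mp (hQ.1.2.1 B' hB' C' hC' h) hxS.2 hxT.2
    rw [hBC, hBC']
  · rintro S ⟨-, -, B, hB, B', hB', rfl⟩ T ⟨-, -, C, hC, C', hC', rfl⟩
      i k j l hik hkj hjl hi hj hk hl
    rw [hP.1.2.2 B hB C hC i k j l hik hkj hjl hi.1 hj.1 hk.1 hl.1,
      hQ.1.2.2 B' hB' C' hC' i k j l hik hkj hjl hi.2 hj.2 hk.2 hl.2]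

theorem interBlocks_refines_left (P Q : Set (Set ℕ)) : Refines (interBlocks P Q) P := by
  rintro S ⟨-, -, B, hB, B', -, rfl⟩
  exact ⟨B, hB, Set.inter_subset_left⟩

theorem interBlocks_refines_right (P Q : Set (Set ℕ)) : Refines (interBlocks P Q) Q := by
  rintro S ⟨-, -, B, -, B', hB', rfl⟩
  exact ⟨B', hB', Set.inter_subset_right⟩

theorem IsENNC.refines_interBlocks {m : ℕ} {P Q R : Set (Set ℕ)} (hR : IsENNC m R)
    (hRP : Refines R P) (hRQ : Refines R Q) : Refines R (interBlocks P Q) := by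
  intro B hB
  obtain ⟨C, hC, hBC⟩ := hRP B hB
  obtain ⟨C', hC', hBC'⟩ := hRQ B hB
  have hne : B.Nonempty := (hR.1.1 B hB).1
  have hsub : B ⊆ C ∩ C' := Set.subset_inter hBC hBC'
  refine ⟨C ∩ C', ⟨hne.mono hsub, fun i hi hCi => ?_, C, hC, C', hC', rfl⟩, hsub⟩
  rw [hCi, hne.subset_singleton_iff] at hsub
  exact hR.2 i hi (hsub ▸ hB)

theorem IsENNC.exists_meet {m : ℕ} {P Q : Set (Set ℕ)} (hP : IsENNC m P) (hQ : IsENNC m Q) :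
    ∃ M : Set (Set ℕ), IsENNC m M ∧ Refines M P ∧ Refines M Q ∧
      ∀ R : Set (Set ℕ), IsENNC m R → Refines R P → Refines R Q → Refines R M :=
  ⟨interBlocks P Q, isENNC_interBlocks hP hQ, interBlocks_refines_left P Q,
    interBlocks_refines_right P Q, fun _ hR => hR.refines_interBlocks⟩

theorem IsENNC.exists_join {m : ℕ} (hm : 1 ≤ m) {P Q : Set (Set ℕ)} (hP : IsENNC m P)
    (hQ : IsENNC m Q) :
    ∃ J : Set (Set ℕ), IsENNC m J ∧ Refines P J ∧ Refines Q J ∧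
      ∀ R : Set (Set ℕ), IsENNC m R → Refines P R → Refines Q R → Refines J R := by
  let commonUpperBounds : Set Refinement := {R | IsENNC m R ∧ Refines P R ∧ Refines Q R}
  have hfinite : commonUpperBounds.Finite :=
    (setOf_isNNC_finite m).subset fun _ hR => hR.1.1
  have hnonempty : commonUpperBounds.Nonempty :=
    ⟨({Set.Icc 1 m} : Set (Set ℕ)), isENNC_singleton_Icc hm, hP.1.refines_Icc, hQ.1.refines_Icc⟩
  have hdirected : DirectedOn (fun R S : Refinement => S ≤ R) commonUpperBounds :=
    fun R ⟨hR, hPR, hQR⟩ S ⟨hS, hPS, hQS⟩ =>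
      ⟨interBlocks R S, ⟨isENNC_interBlocks hR hS, hP.refines_interBlocks hPR hPS,
        hQ.refines_interBlocks hQR hQS⟩,
        interBlocks_refines_left R S, interBlocks_refines_right R S⟩
  obtain ⟨J, hJ⟩ := hfinite.exists_minimal hnonempty
  exact ⟨J, hJ.1.1, hJ.1.2.1, hJ.1.2.2,
    fun R hR hPR hQR => hdirected.le_of_minimal hJ ⟨hR, hPR, hQR⟩⟩

/-- part of Theorem 4.12 of the paper: for every `n ≥ 1`, the set
`eNNC_{2n}`, partially ordered by refinement, is a lattice: any two of its elements have
a least upper bound and a greatest lower bound in `eNNC_{2n}`. -/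
theorem eNNC_is_lattice (n : ℕ) (hn : 1 ≤ n)
    (P Q : Set (Set ℕ)) (hP : IsENNC (2 * n) P) (hQ : IsENNC (2 * n) Q) :
    (∃ J : Set (Set ℕ), IsENNC (2 * n) J ∧ Refines P J ∧ Refines Q J ∧
      ∀ R : Set (Set ℕ), IsENNC (2 * n) R → Refines P R → Refines Q R → Refines J R) ∧
    (∃ M : Set (Set ℕ), IsENNC (2 * n) M ∧ Refines M P ∧ Refines M Q ∧
      ∀ R : Set (Set ℕ), IsENNC (2 * n) R → Refines R P → Refines R Q → Refines R M) :=
  ⟨hP.exists_join (by omega) hQ, hP.exists_meet hQ⟩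
end

section
/- Let n ≥ 2. Every finite set S of arcs of M̄_n which is connected, has complete orbit and is minimal has homological length at most 2n−2. (Equivalently, via the correspondence between such sets of arcs and minimal strong generators of the Paquette–Yıldırım category C̄_n: no minimal strong generator of C̄_n has homological length greater than 2n−2, whence the Orlov spectrum of C̄_n is contained in {1,…,2n−2}.) -/
/-! Combinatorial model of the Paquette–Yıldırım completed cluster category `C̄ₙ`.

The set of marked points `M̄ₙ` consists of the marked points `(k, i)` (the `k`-th marked
point of the `i`-th segment, for `i : Fin n`) together with the accumulation points
(indexed by `Fin n`; `Sum.inr i` is the accumulation point `a_{i+1}` of the paper). -/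

/-- The marked points of `M̄ₙ`: `Sum.inl (k, i)` is a marked point of a segment,
`Sum.inr i` is an accumulation point. -/
abbrev MbarPt (n : ℕ) := (ℤ × Fin n) ⊕ Fin n

/-- The injection of `M̄ₙ` into the circle `ℝ/nℤ`, given by representatives in `[0, n)`:
the accumulation point `i` goes to `i`, and the marked point `(k, i)` goes to
`i + 1/2 + k/(2(|k|+1))`. -/
noncomputable def toCircle {n : ℕ} : MbarPt n → ℝ
  | Sum.inl (k, i) => (i : ℝ) + 1 / 2 + (k : ℝ) / (2 * (|(k : ℝ)| + 1))
  | Sum.inr i => (i : ℝ)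

/-- `y` lies strictly between `x` and `z` in the cyclic order on `M̄ₙ` (going
counterclockwise from `x` to `z`), expressed via the representatives in `[0, n)`. -/
def CycSBtw {n : ℕ} (x y z : MbarPt n) : Prop :=
  (toCircle x < toCircle y ∧ toCircle y < toCircle z) ∨
  (toCircle y < toCircle z ∧ toCircle z < toCircle x) ∨
  (toCircle z < toCircle x ∧ toCircle x < toCircle y)

/-- An arc of `M̄ₙ` is an unordered pair of distinct points of `M̄ₙ` which is not a pair
of consecutive marked points `{(k,i), (k+1,i)}` of a segment. -/
def IsArc {n : ℕ} (p : Sym2 (MbarPt n)) : Prop :=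
  ¬ p.IsDiag ∧ ∀ (k : ℤ) (i : Fin n),
    p ≠ s(Sum.inl (k, i), Sum.inl (k + 1, i))

/-- The `m`-fold clockwise rotation of a point: marked points `(k, i)` move to `(k - m, i)`,
accumulation points are fixed. -/
def rotPt {n : ℕ} (m : ℤ) : MbarPt n → MbarPt n
  | Sum.inl (k, i) => Sum.inl (k - m, i)
  | Sum.inr i => Sum.inr i

/-- The `m`-fold clockwise rotation `ℓ⟦m⟧` of an arc. -/
def rotArc {n : ℕ} (m : ℤ) (p : Sym2 (MbarPt n)) : Sym2 (MbarPt n) :=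
  Sym2.map (rotPt m) p

/-- `p` and `q` are rotations of one another. -/
def SameRot {n : ℕ} (p q : Sym2 (MbarPt n)) : Prop :=
  ∃ m : ℤ, p = rotArc m q

/-- The rotation closure `R(S)` of a set of arcs `S`. -/
def RClos {n : ℕ} (S : Set (Sym2 (MbarPt n))) : Set (Sym2 (MbarPt n)) :=
  {q | ∃ p ∈ S, ∃ m : ℤ, q = rotArc m p}

/-- Two arcs cross if their endpoints alternate in the cyclic order: exactly one
endpoint of one lies strictly between the two endpoints of the other. -/
def Crosses {n : ℕ} (p q : Sym2 (MbarPt n)) : Prop :=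
  ∃ x y z w : MbarPt n, p = s(x, y) ∧ q = s(z, w) ∧ CycSBtw x z y ∧ CycSBtw y w x

/-- Adjacency `ℓ ~ ℓ'` of arcs: they cross, or they are distinct and share an endpoint
which is an accumulation point. -/
def Adj {n : ℕ} (p q : Sym2 (MbarPt n)) : Prop :=
  Crosses p q ∨ (p ≠ q ∧ ∃ i : Fin n, (Sum.inr i : MbarPt n) ∈ p ∧ (Sum.inr i : MbarPt n) ∈ q)

/-- Paths of length `m` in the graph with vertex set `T` and edge relation `Adj`. -/
def AdjChain {n : ℕ} (T : Set (Sym2 (MbarPt n))) : ℕ → Sym2 (MbarPt n) → Sym2 (MbarPt n) → Prop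
  | 0, p, q => p = q
  | m + 1, p, q => ∃ r ∈ T, Adj p r ∧ AdjChain T m r q

/-- `S` is connected: the graph with vertex set `R(S)` and edge relation `~` is connected. -/
def ConnectedArcs {n : ℕ} (S : Set (Sym2 (MbarPt n))) : Prop :=
  ∀ p ∈ RClos S, ∀ q ∈ RClos S, ∃ m : ℕ, AdjChain (RClos S) m p q

/-- `S` has complete orbit: every point of `M̄ₙ` is an endpoint of some arc of `R(S)`. -/
def CompleteOrbit {n : ℕ} (S : Set (Sym2 (MbarPt n))) : Prop :=
  ∀ x : MbarPt n, ∃ p ∈ RClos S, x ∈ p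

/-- `S` is minimal: removing any arc of `S` destroys connectedness or completeness of orbit. -/
def MinimalArcSet {n : ℕ} (S : Set (Sym2 (MbarPt n))) : Prop :=
  ∀ ℓ ∈ S, ¬ (ConnectedArcs (S \ {ℓ}) ∧ CompleteOrbit (S \ {ℓ}))

/-- The homological length of (a connected) `S` is at most `d`: any two vertices of
`R(S)` are joined by a `~`-path of length at most `d`. -/
def HLenLE {n : ℕ} (S : Set (Sym2 (MbarPt n))) (d : ℕ) : Prop :=
  ∀ p ∈ RClos S, ∀ q ∈ RClos S, ∃ m ≤ d, AdjChain (RClos S) m p q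

/-- The homological length of (a connected) `S` is exactly `d`: every pair of vertices of
`R(S)` is joined by a path of length `≤ d`, and some pair admits no path of length `< d`. -/
def HLenEq {n : ℕ} (S : Set (Sym2 (MbarPt n))) (d : ℕ) : Prop :=
  HLenLE S d ∧ ∃ p ∈ RClos S, ∃ q ∈ RClos S, ∀ m < d, ¬ AdjChain (RClos S) m p q

/-!
Give every point of `M̄ₙ` its slot among `a₁, segment 1, a₂, segment 2, …`, and every arc the pair
of slots of its endpoints; slots are invariant under rotation. Minimality forces the arcs of `S`
to lie in distinct rotation orbits and excludes windows (arcs with both endpoints on one segment):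
a window could be removed, an arc of `S` leaving its segment taking over its role.

If arcs in the orbits of `ℓ, ℓ' ∈ S` are adjacent, the slot pairs of `ℓ` and `ℓ'` share a slot or
interleave; conversely, in that case every arc in the orbit of `ℓ` is adjacent to some arc in the
orbit of `ℓ'`. So a shortest path `ℓ₀, …, ℓ_d` for this relation on `S` lifts to a `~`-path of
length `d` from any arc in the orbit of `ℓ₀` to the orbit of `ℓ_d`, and one more step reaches any
arc of that orbit. A shortest path has no chords, so slot pairs two or more steps apart are
disjoint, and counting the `2n` slots gives `d ≤ 2n - 2`. If `d = 2n - 2`, either some link is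
rigid (the two arcs share an accumulation point or interleave, so that all arcs of the two orbits
are adjacent) and the lifts from both ends meet there, or every link shares a segment, the
segments are distinct, `d ≤ n`, hence `n = d = 2`, and a well-chosen rotation of the middle arc is
adjacent to both ends.
-/

section

variable {n : ℕ}

namespace MbarPt

/-- Slots `0, 1, …, 2n - 1` enumerate `a₁`, segment `1`, `a₂`, segment `2`, … in the order of
`toCircle`. -/
def slot : MbarPt n → ℕ
  | Sum.inl (_, i) => 2 * i.1 + 1
  | Sum.inr u => 2 * u.1

@[simp] lemma slot_inl (k : ℤ) (i : Fin n) : slot (Sum.inl (k, i) : MbarPt n) = 2 * i.1 + 1 :=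
  rfl

@[simp] lemma slot_inr (u : Fin n) : slot (Sum.inr u : MbarPt n) = 2 * u.1 := rfl

def height : MbarPt n → ℤ
  | Sum.inl (k, _) => k
  | Sum.inr _ => 0

@[simp] lemma height_inl (k : ℤ) (i : Fin n) : height (Sum.inl (k, i) : MbarPt n) = k := rfl

@[simp] lemma height_inr (u : Fin n) : height (Sum.inr u : MbarPt n) = 0 := rfl

lemma slot_lt (x : MbarPt n) : x.slot < 2 * n := by
  rcases x with ⟨k, i⟩ | u <;> simp only [slot_inl, slot_inr] <;> omega

lemma exists_eq_inl_of_slot_eq {z : MbarPt n} {i : Fin n} (h : z.slot = 2 * i.1 + 1) :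
    ∃ k, z = Sum.inl (k, i) := by
  rcases z with ⟨k, j⟩ | u <;> simp only [slot_inl, slot_inr] at h
  · exact ⟨k, by rw [Fin.ext (by omega : j.1 = i.1)]⟩
  · omega

lemma eq_inr_of_slot_eq {z : MbarPt n} {u : Fin n} (h : z.slot = 2 * u.1) :
    z = Sum.inr u := by
  rcases z with ⟨k, j⟩ | v <;> simp only [slot_inl, slot_inr] at h
  · omega
  · rw [Fin.ext (by omega : v.1 = u.1)]

end MbarPt

open MbarPt

lemma abs_segmentOffset_lt (k : ℤ) : |(k : ℝ) / (2 * (|(k : ℝ)| + 1))| < 1 / 2 := by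
  rw [abs_div, abs_of_pos (by positivity : (0 : ℝ) < 2 * (|(k : ℝ)| + 1)),
    div_lt_iff₀ (by positivity)]
  linarith

lemma strictMono_segmentOffset : StrictMono fun k : ℤ => (k : ℝ) / (2 * (|(k : ℝ)| + 1)) := by
  intro k l hkl
  have hkl' : (k : ℝ) < l := by exact_mod_cast hkl
  simp only
  rw [div_lt_div_iff₀ (by positivity) (by positivity)]
  rcases abs_cases (k : ℝ) with ⟨hk, _⟩ | ⟨hk, _⟩ <;>
    rcases abs_cases (l : ℝ) with ⟨hl, _⟩ | ⟨hl, _⟩ <;> rw [hk, hl] <;> nlinarith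

lemma toCircle_lt_of_slot_lt {x y : MbarPt n} (h : x.slot < y.slot) :
    toCircle x < toCircle y := by
  rcases x with ⟨k, i⟩ | u <;> rcases y with ⟨l, j⟩ | v <;>
    simp only [slot_inl, slot_inr] at h <;> simp only [toCircle]
  · have hij : (i : ℝ) + 1 ≤ j := by exact_mod_cast (by omega : i.1 + 1 ≤ j.1)
    linarith [(abs_lt.1 (abs_segmentOffset_lt k)).2, (abs_lt.1 (abs_segmentOffset_lt l)).1]
  · have hiv : (i : ℝ) + 1 ≤ v := by exact_mod_cast (by omega : i.1 + 1 ≤ v.1)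
    linarith [(abs_lt.1 (abs_segmentOffset_lt k)).2]
  · have huj : (u : ℝ) ≤ j := by exact_mod_cast (by omega : u.1 ≤ j.1)
    linarith [(abs_lt.1 (abs_segmentOffset_lt l)).1]
  · exact_mod_cast (by omega : u.1 < v.1)

lemma slot_le_of_toCircle_lt {x y : MbarPt n} (h : toCircle x < toCircle y) :
    x.slot ≤ y.slot :=
  not_lt.1 fun h' => (toCircle_lt_of_slot_lt h').not_gt h

lemma toCircle_inl_lt_inl_iff {k l : ℤ} {i : Fin n} :
    toCircle (Sum.inl (k, i) : MbarPt n) < toCircle (Sum.inl (l, i)) ↔ k < l := by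
  simp only [toCircle, add_lt_add_iff_left]
  exact strictMono_segmentOffset.lt_iff_lt

lemma toCircle_injective : Function.Injective (toCircle (n := n)) := by
  intro x y h
  have hslot : x.slot = y.slot := by
    by_contra hne
    rcases Nat.lt_or_gt_of_ne hne with hlt | hlt
    · exact (toCircle_lt_of_slot_lt hlt).ne h
    · exact (toCircle_lt_of_slot_lt hlt).ne' h
  rcases x with ⟨k, i⟩ | u <;> rcases y with ⟨l, j⟩ | v <;>
    simp only [slot_inl, slot_inr] at hslot
  · obtain rfl : i = j := Fin.ext (by omega)
    obtain rfl : k = l := strictMono_segmentOffset.injective (by simpa [toCircle] using h)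
    rfl
  · omega
  · omega
  · rw [Fin.ext (by omega : u.1 = v.1)]

lemma toCircle_lt_or_gt_of_ne {x y : MbarPt n} (h : x ≠ y) :
    toCircle x < toCircle y ∨ toCircle y < toCircle x :=
  lt_or_gt_of_ne (toCircle_injective.ne h)

lemma toCircle_lt_iff {x y : MbarPt n} :
    toCircle x < toCircle y ↔ x.slot < y.slot ∨ x.slot = y.slot ∧ x.height < y.height := by
  refine ⟨fun h => ?_, ?_⟩
  · rcases (slot_le_of_toCircle_lt h).lt_or_eq with hlt | heq
    · exact Or.inl hlt
    refine Or.inr ⟨heq, ?_⟩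
    rcases x with ⟨k, i⟩ | u <;> rcases y with ⟨l, j⟩ | v <;>
      simp only [slot_inl, slot_inr] at heq
    · obtain rfl : i = j := Fin.ext (by omega)
      exact toCircle_inl_lt_inl_iff.1 h
    · omega
    · omega
    · obtain rfl : u = v := Fin.ext (by omega)
      exact absurd h (lt_irrefl _)
  · rintro (h | ⟨heq, h⟩)
    · exact toCircle_lt_of_slot_lt h
    rcases x with ⟨k, i⟩ | u <;> rcases y with ⟨l, j⟩ | v <;>
      simp only [slot_inl, slot_inr, height_inl, height_inr] at heq h
    · obtain rfl : i = j := Fin.ext (by omega)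
      exact toCircle_inl_lt_inl_iff.2 h
    all_goals omega

lemma crosses_of_lt {x y z w : MbarPt n} (hxz : toCircle x < toCircle z)
    (hzy : toCircle z < toCircle y) (hw : toCircle w < toCircle x ∨ toCircle y < toCircle w) :
    Crosses s(x, y) s(z, w) := by
  refine ⟨x, y, z, w, rfl, rfl, Or.inl ⟨hxz, hzy⟩, ?_⟩
  rcases hw with hw | hw
  · exact Or.inr (Or.inl ⟨hw, hxz.trans hzy⟩)
  · exact Or.inr (Or.inr ⟨hxz.trans hzy, hw⟩)

lemma Crosses.exists_of_lt {x y : MbarPt n} {q : Sym2 (MbarPt n)}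
    (hxy : toCircle x < toCircle y) (h : Crosses s(x, y) q) :
    ∃ z w, q = s(z, w) ∧ toCircle x < toCircle z ∧ toCircle z < toCircle y ∧
      (toCircle w < toCircle x ∨ toCircle y < toCircle w) := by
  obtain ⟨x', y', z, w, hp, hq, h₁, h₂⟩ := h
  unfold CycSBtw at h₁ h₂
  rcases Sym2.eq_iff.1 hp with ⟨rfl, rfl⟩ | ⟨rfl, rfl⟩
  · refine ⟨z, w, hq, ?_, ?_, ?_⟩
    · rcases h₁ with ⟨a, b⟩ | ⟨a, b⟩ | ⟨a, b⟩ <;> linarith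
    · rcases h₁ with ⟨a, b⟩ | ⟨a, b⟩ | ⟨a, b⟩ <;> linarith
    · rcases h₂ with ⟨a, b⟩ | ⟨a, b⟩ | ⟨a, b⟩
      exacts [by linarith, Or.inl a, Or.inr b]
  · refine ⟨w, z, hq.trans Sym2.eq_swap, ?_, ?_, ?_⟩
    · rcases h₂ with ⟨a, b⟩ | ⟨a, b⟩ | ⟨a, b⟩ <;> linarith
    · rcases h₂ with ⟨a, b⟩ | ⟨a, b⟩ | ⟨a, b⟩ <;> linarith
    · rcases h₁ with ⟨a, b⟩ | ⟨a, b⟩ | ⟨a, b⟩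
      exacts [by linarith, Or.inl a, Or.inr b]

lemma Crosses.not_isDiag {p q : Sym2 (MbarPt n)} (h : Crosses p q) : ¬ p.IsDiag := by
  obtain ⟨x, y, z, w, rfl, -, h₁, -⟩ := h
  intro hd
  obtain rfl := Sym2.mk_isDiag_iff.1 hd
  unfold CycSBtw at h₁
  rcases h₁ with ⟨a, b⟩ | ⟨a, b⟩ | ⟨a, b⟩ <;> linarith

lemma exists_eq_mk_toCircle_lt {p : Sym2 (MbarPt n)} (h : ¬ p.IsDiag) :
    ∃ a b, p = s(a, b) ∧ toCircle a < toCircle b := by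
  induction p using Sym2.ind with
  | _ a b =>
    rcases toCircle_lt_or_gt_of_ne (fun hab => h (Sym2.mk_isDiag_iff.2 hab)) with hab | hab
    · exact ⟨a, b, rfl, hab⟩
    · exact ⟨b, a, Sym2.eq_swap, hab⟩

lemma Crosses.symm {p q : Sym2 (MbarPt n)} (h : Crosses p q) : Crosses q p := by
  obtain ⟨x, y, rfl, hxy⟩ := exists_eq_mk_toCircle_lt h.not_isDiag
  obtain ⟨z, w, rfl, hxz, hzy, hw⟩ := h.exists_of_lt hxy
  rcases hw with hw | hw
  · rw [Sym2.eq_swap (a := z)]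
    exact crosses_of_lt hw hxz (Or.inr hzy)
  · rw [Sym2.eq_swap (a := x)]
    exact crosses_of_lt hzy hw (Or.inl hxz)

lemma Adj.symm {p q : Sym2 (MbarPt n)} (h : Adj p q) : Adj q p := by
  rcases h with h | ⟨hne, u, hp, hq⟩
  · exact Or.inl h.symm
  · exact Or.inr ⟨hne.symm, u, hq, hp⟩

@[simp] lemma rotPt_inl (m k : ℤ) (i : Fin n) :
    rotPt m (Sum.inl (k, i) : MbarPt n) = Sum.inl (k - m, i) := rfl

@[simp] lemma rotPt_inr (m : ℤ) (u : Fin n) : rotPt m (Sum.inr u : MbarPt n) = Sum.inr u := rfl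

lemma rotPt_rotPt (m m' : ℤ) (x : MbarPt n) : rotPt m (rotPt m' x) = rotPt (m + m') x := by
  rcases x with ⟨k, i⟩ | u
  · simp only [rotPt_inl, sub_sub, add_comm m']
  · rfl

@[simp] lemma rotPt_zero (x : MbarPt n) : rotPt 0 x = x := by
  rcases x with ⟨k, i⟩ | u <;> simp

lemma rotPt_injective (m : ℤ) : Function.Injective (rotPt (n := n) m) := by
  intro x y h
  simpa [rotPt_rotPt] using congrArg (rotPt (-m)) h

@[simp] lemma slot_rotPt (m : ℤ) (x : MbarPt n) : (rotPt m x).slot = x.slot := by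
  rcases x with ⟨k, i⟩ | u <;> rfl

@[simp] lemma rotArc_mk (m : ℤ) (a b : MbarPt n) :
    rotArc m s(a, b) = s(rotPt m a, rotPt m b) := rfl

lemma rotArc_rotArc (m m' : ℤ) (p : Sym2 (MbarPt n)) :
    rotArc m (rotArc m' p) = rotArc (m + m') p := by
  induction p using Sym2.ind with
  | _ a b => simp only [rotArc_mk, rotPt_rotPt]

@[simp] lemma rotArc_zero (p : Sym2 (MbarPt n)) : rotArc 0 p = p := by
  induction p using Sym2.ind with
  | _ a b => simp

lemma SameRot.refl (p : Sym2 (MbarPt n)) : SameRot p p := ⟨0, (rotArc_zero p).symm⟩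

lemma SameRot.symm {p q : Sym2 (MbarPt n)} (h : SameRot p q) : SameRot q p := by
  obtain ⟨m, rfl⟩ := h
  exact ⟨-m, by rw [rotArc_rotArc, neg_add_cancel, rotArc_zero]⟩

lemma SameRot.trans {p q r : Sym2 (MbarPt n)} (h : SameRot p q) (h' : SameRot q r) :
    SameRot p r := by
  obtain ⟨m, rfl⟩ := h
  obtain ⟨m', rfl⟩ := h'
  exact ⟨m + m', rotArc_rotArc m m' r⟩

lemma sameRot_rotArc (m : ℤ) (p : Sym2 (MbarPt n)) : SameRot (rotArc m p) p := ⟨m, rfl⟩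

lemma isArc_rotArc {ℓ : Sym2 (MbarPt n)} (h : IsArc ℓ) (m : ℤ) : IsArc (rotArc m ℓ) := by
  induction ℓ using Sym2.ind with
  | _ a b =>
    refine ⟨fun hd => h.1 (Sym2.mk_isDiag_iff.2 (rotPt_injective m (Sym2.mk_isDiag_iff.1 hd))),
      fun k i hc => h.2 (k + m) i ?_⟩
    have := congrArg (rotArc (-m)) hc
    simp only [rotArc_rotArc, neg_add_cancel, rotArc_zero] at this
    rw [this]
    simp only [rotArc_mk, rotPt_inl, sub_neg_eq_add, add_right_comm k 1 m]

lemma IsArc.of_sameRot {p q : Sym2 (MbarPt n)} (h : IsArc q) (hpq : SameRot p q) : IsArc p := by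
  obtain ⟨m, rfl⟩ := hpq
  exact isArc_rotArc h m

lemma isArc_of_mem_rClos {S : Set (Sym2 (MbarPt n))} (harc : ∀ p ∈ S, IsArc p)
    {q : Sym2 (MbarPt n)} (hq : q ∈ RClos S) : IsArc q := by
  obtain ⟨p, hp, hqp⟩ := hq
  exact (harc p hp).of_sameRot hqp

lemma inr_mem_rotArc_iff {u : Fin n} {m : ℤ} {p : Sym2 (MbarPt n)} :
    (Sum.inr u : MbarPt n) ∈ rotArc m p ↔ (Sum.inr u : MbarPt n) ∈ p := by
  induction p using Sym2.ind with
  | _ a b => rcases a with ⟨k, i⟩ | v <;> rcases b with ⟨l, j⟩ | w <;> simp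

lemma SameRot.inr_mem_iff {u : Fin n} {p q : Sym2 (MbarPt n)} (h : SameRot p q) :
    (Sum.inr u : MbarPt n) ∈ p ↔ (Sum.inr u : MbarPt n) ∈ q := by
  obtain ⟨m, rfl⟩ := h
  exact inr_mem_rotArc_iff

def MeetsSegment (i : Fin n) (p : Sym2 (MbarPt n)) : Prop :=
  ∃ k : ℤ, (Sum.inl (k, i) : MbarPt n) ∈ p

lemma SameRot.meetsSegment_iff {i : Fin n} {p q : Sym2 (MbarPt n)} (h : SameRot p q) :
    MeetsSegment i p ↔ MeetsSegment i q := by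
  obtain ⟨m, rfl⟩ := h
  constructor
  · rintro ⟨t, ht⟩
    obtain ⟨a, ha, hrot⟩ := Sym2.mem_map.1 ht
    rcases a with ⟨k, j⟩ | v <;> simp only [rotPt_inl, rotPt_inr, reduceCtorEq, Sum.inl.injEq,
      Prod.mk.injEq] at hrot
    exact ⟨k, hrot.2 ▸ ha⟩
  · rintro ⟨k, hk⟩
    exact ⟨k - m, Sym2.mem_map.2 ⟨_, hk, rfl⟩⟩

def lowSlot (p : Sym2 (MbarPt n)) : ℕ :=
  Sym2.lift ⟨fun a b => min a.slot b.slot, fun _ _ => min_comm _ _⟩ p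

def highSlot (p : Sym2 (MbarPt n)) : ℕ :=
  Sym2.lift ⟨fun a b => max a.slot b.slot, fun _ _ => max_comm _ _⟩ p

@[simp] lemma lowSlot_mk (a b : MbarPt n) : lowSlot s(a, b) = min a.slot b.slot := rfl

@[simp] lemma highSlot_mk (a b : MbarPt n) : highSlot s(a, b) = max a.slot b.slot := rfl

lemma SameRot.lowSlot_eq {p q : Sym2 (MbarPt n)} (h : SameRot p q) : lowSlot p = lowSlot q := by
  obtain ⟨m, rfl⟩ := h
  induction q using Sym2.ind with
  | _ a b => simp

lemma SameRot.highSlot_eq {p q : Sym2 (MbarPt n)} (h : SameRot p q) :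
    highSlot p = highSlot q := by
  obtain ⟨m, rfl⟩ := h
  induction q using Sym2.ind with
  | _ a b => simp

lemma lowSlot_le_highSlot (p : Sym2 (MbarPt n)) : lowSlot p ≤ highSlot p := by
  induction p using Sym2.ind with
  | _ a b => simp only [lowSlot_mk, highSlot_mk]; omega

lemma highSlot_lt (p : Sym2 (MbarPt n)) : highSlot p < 2 * n := by
  induction p using Sym2.ind with
  | _ a b => simpa using ⟨a.slot_lt, b.slot_lt⟩

lemma slots_mk_of_toCircle_lt {a b : MbarPt n} (h : toCircle a < toCircle b) :
    lowSlot s(a, b) = a.slot ∧ highSlot s(a, b) = b.slot := by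
  have := slot_le_of_toCircle_lt h
  simp only [lowSlot_mk, highSlot_mk]
  omega

lemma sameRot_mk_inl (c t : ℤ) (i : Fin n) (ξ : MbarPt n) :
    SameRot s(Sum.inl (t, i), rotPt (c - t) ξ) s(Sum.inl (c, i), ξ) :=
  ⟨c - t, by simp⟩

lemma exists_eq_of_sameRot_inl_inr {c : ℤ} {i : Fin n} {u : Fin n} {x : Sym2 (MbarPt n)}
    (h : SameRot x s(Sum.inl (c, i), Sum.inr u)) : ∃ t, x = s(Sum.inl (t, i), Sum.inr u) := by
  obtain ⟨m, rfl⟩ := h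
  exact ⟨c - m, by simp⟩

lemma exists_eq_of_sameRot_inl_inl {c d : ℤ} {i j : Fin n} {x : Sym2 (MbarPt n)}
    (h : SameRot x s(Sum.inl (c, i), Sum.inl (d, j))) :
    ∃ t, x = s(Sum.inl (t, i), Sum.inl (t + (d - c), j)) := by
  obtain ⟨m, rfl⟩ := h
  exact ⟨c - m, by simp only [rotArc_mk, rotPt_inl]; ring_nf⟩

lemma eq_of_sameRot_inr_inr {u v : Fin n} {x : Sym2 (MbarPt n)}
    (h : SameRot x s(Sum.inr u, Sum.inr v)) : x = s(Sum.inr u, Sum.inr v) := by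
  obtain ⟨m, rfl⟩ := h
  simp

lemma crosses_inl_inl_of_lt {r r' t t' : ℤ} {i j : Fin n} (hij : i.1 < j.1) (hrt : r < t)
    (hrt' : r' < t') :
    Crosses s(Sum.inl (r, i), Sum.inl (r', j)) s(Sum.inl (t, i), (Sum.inl (t', j) : MbarPt n)) :=
  crosses_of_lt (toCircle_inl_lt_inl_iff.2 hrt) (toCircle_lt_of_slot_lt (by simpa))
    (Or.inr (toCircle_inl_lt_inl_iff.2 hrt'))

lemma eq_inr_inr_or_inl_inr_or_inl_inl {ℓ : Sym2 (MbarPt n)} (hd : ¬ ℓ.IsDiag)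
    (hs : lowSlot ℓ ≠ highSlot ℓ) :
    (∃ u v : Fin n, ℓ = s(Sum.inr u, Sum.inr v)) ∨
    (∃ (c : ℤ) (i : Fin n) (u : Fin n), ℓ = s(Sum.inl (c, i), Sum.inr u)) ∨
    (∃ (c : ℤ) (i : Fin n) (d : ℤ) (j : Fin n), i.1 < j.1 ∧
      ℓ = s(Sum.inl (c, i), Sum.inl (d, j))) := by
  induction ℓ using Sym2.ind with
  | _ a b =>
    rcases a with ⟨c, i⟩ | u <;> rcases b with ⟨d, j⟩ | v
    · simp only [lowSlot_mk, highSlot_mk, slot_inl] at hs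
      rcases Nat.lt_or_gt_of_ne (by omega : i.1 ≠ j.1) with hij | hij
      · exact Or.inr (Or.inr ⟨c, i, d, j, hij, rfl⟩)
      · exact Or.inr (Or.inr ⟨d, j, c, i, hij, Sym2.eq_swap⟩)
    · exact Or.inr (Or.inl ⟨c, i, v, rfl⟩)
    · exact Or.inr (Or.inl ⟨d, j, u, Sym2.eq_swap⟩)
    · exact Or.inl ⟨u, v, rfl⟩

lemma SameRot.eq_or_adj {ℓ x y : Sym2 (MbarPt n)} (harc : IsArc ℓ)
    (hs : lowSlot ℓ ≠ highSlot ℓ) (hx : SameRot x ℓ) (hy : SameRot y ℓ) : x = y ∨ Adj x y := by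
  rcases eq_inr_inr_or_inl_inr_or_inl_inl harc.1 hs with
    ⟨u, v, rfl⟩ | ⟨c, i, u, rfl⟩ | ⟨c, i, d, j, hij, rfl⟩
  · exact Or.inl ((eq_of_sameRot_inr_inr hx).trans (eq_of_sameRot_inr_inr hy).symm)
  · obtain ⟨t, rfl⟩ := exists_eq_of_sameRot_inl_inr hx
    obtain ⟨t', rfl⟩ := exists_eq_of_sameRot_inl_inr hy
    by_cases htt' : t = t'
    · exact Or.inl (by rw [htt'])
    · exact Or.inr (Or.inr ⟨by simpa using htt', u, Sym2.mem_mk_right _ _, Sym2.mem_mk_right _ _⟩)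
  · obtain ⟨t, rfl⟩ := exists_eq_of_sameRot_inl_inl hx
    obtain ⟨t', rfl⟩ := exists_eq_of_sameRot_inl_inl hy
    rcases lt_trichotomy t t' with htt' | rfl | htt'
    · exact Or.inr (Or.inl (crosses_inl_inl_of_lt hij htt' (by omega)))
    · exact Or.inl rfl
    · exact Or.inr (Or.inl (crosses_inl_inl_of_lt hij htt' (by omega)).symm)

lemma crosses_of_mem_uIoo {a b z w : MbarPt n}
    (hz : toCircle z ∈ Set.uIoo (toCircle a) (toCircle b))
    (hw : toCircle w ∉ Set.uIcc (toCircle a) (toCircle b)) : Crosses s(a, b) s(z, w) := by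
  have key : ∀ {a b : MbarPt n}, toCircle a ≤ toCircle b →
      toCircle z ∈ Set.uIoo (toCircle a) (toCircle b) →
      toCircle w ∉ Set.uIcc (toCircle a) (toCircle b) → Crosses s(a, b) s(z, w) := by
    intro a b hab hz hw
    rw [Set.uIoo_of_le hab] at hz
    rw [Set.uIcc_of_le hab, Set.mem_Icc, not_and_or, not_le, not_le] at hw
    exact crosses_of_lt hz.1 hz.2 (hw.imp id id)
  rcases le_total (toCircle a) (toCircle b) with hab | hab
  · exact key hab hz hw
  · rw [Sym2.eq_swap]
    exact key hab (Set.uIoo_comm (toCircle a) _ ▸ hz) (Set.uIcc_comm (toCircle a) _ ▸ hw)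

lemma toCircle_mem_uIoo_of_slot {a b z : MbarPt n} (h₁ : min a.slot b.slot < z.slot)
    (h₂ : z.slot < max a.slot b.slot) : toCircle z ∈ Set.uIoo (toCircle a) (toCircle b) := by
  rcases le_total a.slot b.slot with hab | hab
  · rw [min_eq_left hab] at h₁; rw [max_eq_right hab] at h₂
    exact Set.mem_uIoo_of_lt (toCircle_lt_of_slot_lt h₁) (toCircle_lt_of_slot_lt h₂)
  · rw [min_eq_right hab] at h₁; rw [max_eq_left hab] at h₂
    exact Set.mem_uIoo_of_gt (toCircle_lt_of_slot_lt h₁) (toCircle_lt_of_slot_lt h₂)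

lemma toCircle_notMem_uIcc_of_slot {a b z : MbarPt n}
    (h : z.slot < min a.slot b.slot ∨ max a.slot b.slot < z.slot) :
    toCircle z ∉ Set.uIcc (toCircle a) (toCircle b) := by
  rcases h with h | h
  · exact Set.notMem_uIcc_of_lt (toCircle_lt_of_slot_lt (lt_of_lt_of_le h (min_le_left _ _)))
      (toCircle_lt_of_slot_lt (lt_of_lt_of_le h (min_le_right _ _)))
  · exact Set.notMem_uIcc_of_gt (toCircle_lt_of_slot_lt (lt_of_le_of_lt (le_max_left _ _) h))
      (toCircle_lt_of_slot_lt (lt_of_le_of_lt (le_max_right _ _) h))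

lemma exists_inl_mem_uIoo_and_inl_notMem_uIcc {α : ℤ} {i : Fin n} {e : MbarPt n}
    (harc : IsArc s(Sum.inl (α, i), e)) :
    ∃ t t' : ℤ, toCircle (Sum.inl (t, i) : MbarPt n) ∈
        Set.uIoo (toCircle (Sum.inl (α, i) : MbarPt n)) (toCircle e) ∧
      toCircle (Sum.inl (t', i) : MbarPt n) ∉
        Set.uIcc (toCircle (Sum.inl (α, i) : MbarPt n)) (toCircle e) := by
  have hne : (Sum.inl (α, i) : MbarPt n) ≠ e := fun h => harc.1 (Sym2.mk_isDiag_iff.2 h)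
  have hnext : e ≠ Sum.inl (α + 1, i) := fun h => harc.2 α i (by rw [h])
  have hprev : e ≠ Sum.inl (α - 1, i) := fun h =>
    harc.2 (α - 1) i (by rw [h, Sym2.eq_swap, sub_add_cancel])
  have hlt : ∀ {β γ : ℤ}, β < γ → toCircle (Sum.inl (β, i) : MbarPt n) < toCircle
      (Sum.inl (γ, i) : MbarPt n) := fun h => toCircle_inl_lt_inl_iff.2 h
  rcases toCircle_lt_or_gt_of_ne hne with hae | hea
  · refine ⟨α + 1, α - 1, Set.mem_uIoo_of_lt (hlt (by omega)) ?_,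
      Set.notMem_uIcc_of_lt (hlt (by omega)) ((hlt (by omega)).trans hae)⟩
    rcases toCircle_lt_iff.1 hae with hs | ⟨hs, hh⟩
    · exact toCircle_lt_of_slot_lt (by simpa using hs)
    · obtain ⟨β, rfl⟩ := exists_eq_inl_of_slot_eq hs.symm
      simp only [height_inl, ne_eq, Sum.inl.injEq, Prod.mk.injEq, and_true] at hh hnext
      exact hlt (by omega)
  · refine ⟨α - 1, α + 1, Set.mem_uIoo_of_gt ?_ (hlt (by omega)),
      Set.notMem_uIcc_of_gt (hlt (by omega)) (hea.trans (hlt (by omega)))⟩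
    rcases toCircle_lt_iff.1 hea with hs | ⟨hs, hh⟩
    · exact toCircle_lt_of_slot_lt (by simpa using hs)
    · obtain ⟨β, rfl⟩ := exists_eq_inl_of_slot_eq hs
      simp only [height_inl, ne_eq, Sum.inl.injEq, Prod.mk.injEq, and_true] at hh hprev
      exact hlt (by omega)

def SharesSlot (p q : Sym2 (MbarPt n)) : Prop :=
  ∃ a ∈ p, ∃ b ∈ q, a.slot = b.slot

def SlotsInterleave (p q : Sym2 (MbarPt n)) : Prop :=
  lowSlot p < lowSlot q ∧ lowSlot q < highSlot p ∧ highSlot p < highSlot q ∨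
  lowSlot q < lowSlot p ∧ lowSlot p < highSlot q ∧ highSlot q < highSlot p

def SlotLinked (p q : Sym2 (MbarPt n)) : Prop :=
  SharesSlot p q ∨ SlotsInterleave p q

lemma sharesSlot_iff {p q : Sym2 (MbarPt n)} :
    SharesSlot p q ↔ lowSlot p = lowSlot q ∨ lowSlot p = highSlot q ∨
      highSlot p = lowSlot q ∨ highSlot p = highSlot q := by
  induction p using Sym2.ind with
  | _ a b =>
    induction q using Sym2.ind with
    | _ c d =>
      simp only [SharesSlot, Sym2.mem_iff, exists_eq_or_imp, exists_eq_left, lowSlot_mk,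
        highSlot_mk]
      omega

lemma SlotLinked.symm {p q : Sym2 (MbarPt n)} (h : SlotLinked p q) : SlotLinked q p := by
  unfold SlotLinked SlotsInterleave at *
  rw [sharesSlot_iff] at *
  omega

lemma slotLinked_congr {p p' q q' : Sym2 (MbarPt n)} (hlp : lowSlot p = lowSlot p')
    (hhp : highSlot p = highSlot p') (hlq : lowSlot q = lowSlot q')
    (hhq : highSlot q = highSlot q') : SlotLinked p q ↔ SlotLinked p' q' := by
  unfold SlotLinked SlotsInterleave
  rw [sharesSlot_iff, sharesSlot_iff, hlp, hhp, hlq, hhq]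

lemma Adj.slotLinked {x y : Sym2 (MbarPt n)} (hx : ¬ x.IsDiag) (h : Adj x y) :
    SlotLinked x y := by
  rcases h with h | ⟨-, u, hux, huy⟩
  · obtain ⟨x₁, x₂, rfl, hx₁₂⟩ := exists_eq_mk_toCircle_lt hx
    obtain ⟨z, w, rfl, h₁, h₂, hw⟩ := h.exists_of_lt hx₁₂
    have := slot_le_of_toCircle_lt hx₁₂
    have := slot_le_of_toCircle_lt h₁
    have := slot_le_of_toCircle_lt h₂
    have := hw.imp slot_le_of_toCircle_lt slot_le_of_toCircle_lt
    unfold SlotLinked SlotsInterleave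
    rw [sharesSlot_iff]
    simp only [lowSlot_mk, highSlot_mk]
    omega
  · exact Or.inl ⟨_, hux, _, huy, rfl⟩

lemma crosses_of_slotsInterleave {x y : Sym2 (MbarPt n)} (hx : ¬ x.IsDiag) (hy : ¬ y.IsDiag)
    (h : SlotsInterleave x y) : Crosses x y := by
  obtain ⟨x₁, x₂, rfl, hx₁₂⟩ := exists_eq_mk_toCircle_lt hx
  obtain ⟨y₁, y₂, rfl, hy₁₂⟩ := exists_eq_mk_toCircle_lt hy
  obtain ⟨hlx, hhx⟩ := slots_mk_of_toCircle_lt hx₁₂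
  obtain ⟨hly, hhy⟩ := slots_mk_of_toCircle_lt hy₁₂
  rw [SlotsInterleave, hlx, hhx, hly, hhy] at h
  rcases h with ⟨h₁, h₂, h₃⟩ | ⟨h₁, h₂, h₃⟩
  · exact crosses_of_lt (toCircle_lt_of_slot_lt h₁) (toCircle_lt_of_slot_lt h₂)
      (Or.inr (toCircle_lt_of_slot_lt h₃))
  · rw [Sym2.eq_swap (a := y₁)]
    exact crosses_of_lt (toCircle_lt_of_slot_lt h₂) (toCircle_lt_of_slot_lt h₃)
      (Or.inl (toCircle_lt_of_slot_lt h₁))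

lemma exists_sameRot_adj_of_inr_mem {x : Sym2 (MbarPt n)} {u : Fin n}
    (hx : (Sum.inr u : MbarPt n) ∈ x) (c : ℤ) (i : Fin n) :
    ∃ y, SameRot y s(Sum.inl (c, i), Sum.inr u) ∧ Adj x y := by
  by_cases hxℓ : x = s(Sum.inl (c, i), Sum.inr u)
  · refine ⟨s(Sum.inl (c - 1, i), Sum.inr u), ⟨1, rfl⟩,
      Or.inr ⟨?_, u, hx, Sym2.mem_mk_right _ _⟩⟩
    simp only [hxℓ, ne_eq, Sym2.eq_iff, Sum.inl.injEq, Prod.mk.injEq, reduceCtorEq, and_true,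
      and_false, or_false]
    omega
  · exact ⟨_, SameRot.refl _, Or.inr ⟨hxℓ, u, hx, Sym2.mem_mk_right _ _⟩⟩

lemma exists_sameRot_crosses_of_inl_inl {α γ c d : ℤ} {i j : Fin n} (hij : i ≠ j) :
    ∃ y, SameRot y s(Sum.inl (c, i), Sum.inl (d, j)) ∧
      Crosses s(Sum.inl (α, i), (Sum.inl (γ, j) : MbarPt n)) y := by
  rcases Nat.lt_or_gt_of_ne (Fin.val_ne_of_ne hij) with hij | hij
  · set t := max (α + 1) (γ + (c - d) + 1)
    exact ⟨_, sameRot_mk_inl c t i (Sum.inl (d, j)),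
      crosses_inl_inl_of_lt hij (by omega) (by omega)⟩
  · set t := min (α - 1) (γ + (c - d) - 1)
    refine ⟨_, sameRot_mk_inl c t i (Sum.inl (d, j)), ?_⟩
    rw [rotPt_inl, Sym2.eq_swap, Sym2.eq_swap (a := (Sum.inl (t, i) : MbarPt n))]
    exact (crosses_inl_inl_of_lt hij (by omega) (by omega)).symm

lemma exists_sameRot_crosses_of_slot_ne {α c : ℤ} {i : Fin n} {e ξ : MbarPt n}
    (harc : IsArc s(Sum.inl (α, i), e)) (hξi : ξ.slot ≠ 2 * i.1 + 1) (hξe : ξ.slot ≠ e.slot) :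
    ∃ y, SameRot y s(Sum.inl (c, i), ξ) ∧ Crosses s(Sum.inl (α, i), e) y := by
  obtain ⟨t, t', hin, hout⟩ := exists_inl_mem_uIoo_and_inl_notMem_uIcc harc
  by_cases hξ : min (2 * i.1 + 1) e.slot < ξ.slot ∧ ξ.slot < max (2 * i.1 + 1) e.slot
  · refine ⟨_, sameRot_mk_inl c t' i ξ, ?_⟩
    rw [Sym2.eq_swap (a := (Sum.inl (t', i) : MbarPt n))]
    exact crosses_of_mem_uIoo (toCircle_mem_uIoo_of_slot (by simpa using hξ.1)
      (by simpa using hξ.2)) hout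
  · refine ⟨_, sameRot_mk_inl c t i ξ, crosses_of_mem_uIoo hin
      (toCircle_notMem_uIcc_of_slot ?_)⟩
    simp only [slot_rotPt, slot_inl]
    omega

lemma exists_sameRot_adj_of_meetsSegment {x : Sym2 (MbarPt n)} {i : Fin n} (hx : IsArc x)
    (hxi : MeetsSegment i x) (c : ℤ) {ξ : MbarPt n} (hξ : ξ.slot ≠ 2 * i.1 + 1) :
    ∃ y, SameRot y s(Sum.inl (c, i), ξ) ∧ Adj x y := by
  obtain ⟨α, hα⟩ := hxi
  obtain ⟨e, rfl⟩ : ∃ e : MbarPt n, x = s(Sum.inl (α, i), e) := Sym2.mem_iff_exists.1 hα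
  by_cases hξe : ξ.slot = e.slot
  · rcases ξ with ⟨d, j⟩ | u
    · obtain ⟨γ, rfl⟩ := exists_eq_inl_of_slot_eq hξe.symm
      have hij : i ≠ j := by rintro rfl; exact hξ rfl
      obtain ⟨y, hy, hxy⟩ := exists_sameRot_crosses_of_inl_inl (α := α) (γ := γ) (c := c)
        (d := d) hij
      exact ⟨y, hy, Or.inl hxy⟩
    · obtain rfl := eq_inr_of_slot_eq hξe.symm
      exact exists_sameRot_adj_of_inr_mem (Sym2.mem_mk_right _ _) c i
  · obtain ⟨y, hy, hxy⟩ := exists_sameRot_crosses_of_slot_ne (c := c) hx hξ hξe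
    exact ⟨y, hy, Or.inl hxy⟩

lemma exists_sameRot_adj_of_slotLinked {ℓ₁ ℓ₂ x : Sym2 (MbarPt n)} (h₁ : IsArc ℓ₁)
    (h₂ : IsArc ℓ₂) (hs₂ : lowSlot ℓ₂ ≠ highSlot ℓ₂) (hne : ¬ SameRot ℓ₁ ℓ₂)
    (hlink : SlotLinked ℓ₁ ℓ₂) (hx : SameRot x ℓ₁) : ∃ y, SameRot y ℓ₂ ∧ Adj x y := by
  rcases hlink with ⟨a, ha, b, hb, hab⟩ | hint
  · rcases b with ⟨c, i⟩ | u
    · obtain ⟨k, rfl⟩ := exists_eq_inl_of_slot_eq hab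
      obtain ⟨ξ, rfl⟩ := Sym2.mem_iff_exists.1 hb
      refine exists_sameRot_adj_of_meetsSegment (h₁.of_sameRot hx)
        (hx.meetsSegment_iff.2 ⟨k, ha⟩) c ?_
      simp only [lowSlot_mk, highSlot_mk, slot_inl] at hs₂
      omega
    · obtain rfl := eq_inr_of_slot_eq hab
      refine ⟨ℓ₂, SameRot.refl _, Or.inr ⟨?_, u, hx.inr_mem_iff.2 ha, hb⟩⟩
      rintro rfl
      exact hne hx.symm
  · refine ⟨ℓ₂, SameRot.refl _, Or.inl (crosses_of_slotsInterleave (h₁.of_sameRot hx).1 h₂.1 ?_)⟩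
    rwa [SlotsInterleave, hx.lowSlot_eq, hx.highSlot_eq]

def IsRigidPair (p q : Sym2 (MbarPt n)) : Prop :=
  (∃ u : Fin n, (Sum.inr u : MbarPt n) ∈ p ∧ (Sum.inr u : MbarPt n) ∈ q) ∨ SlotsInterleave p q

lemma adj_of_isRigidPair {ℓ₁ ℓ₂ x y : Sym2 (MbarPt n)} (h₁ : IsArc ℓ₁) (h₂ : IsArc ℓ₂)
    (hne : ¬ SameRot ℓ₁ ℓ₂) (hrigid : IsRigidPair ℓ₁ ℓ₂) (hx : SameRot x ℓ₁)
    (hy : SameRot y ℓ₂) : Adj x y := by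
  rcases hrigid with ⟨u, hu₁, hu₂⟩ | hint
  · refine Or.inr ⟨?_, u, hx.inr_mem_iff.2 hu₁, hy.inr_mem_iff.2 hu₂⟩
    rintro rfl
    exact hne (hx.symm.trans hy)
  · refine Or.inl (crosses_of_slotsInterleave (h₁.of_sameRot hx).1 (h₂.of_sameRot hy).1 ?_)
    rwa [SlotsInterleave, hx.lowSlot_eq, hx.highSlot_eq, hy.lowSlot_eq, hy.highSlot_eq]

lemma exists_meetsSegment_of_not_isRigidPair {p q : Sym2 (MbarPt n)} (hlink : SlotLinked p q)
    (hrigid : ¬ IsRigidPair p q) : ∃ i, MeetsSegment i p ∧ MeetsSegment i q := by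
  rcases hlink with ⟨a, ha, b, hb, hab⟩ | hint
  · rcases b with ⟨c, i⟩ | u
    · obtain ⟨k, rfl⟩ := exists_eq_inl_of_slot_eq hab
      exact ⟨i, ⟨k, ha⟩, ⟨c, hb⟩⟩
    · obtain rfl := eq_inr_of_slot_eq hab
      exact absurd (Or.inl ⟨u, ha, hb⟩) hrigid
  · exact absurd (Or.inr hint) hrigid

lemma AdjChain.append {T : Set (Sym2 (MbarPt n))} {m₁ m₂ : ℕ} {p x q : Sym2 (MbarPt n)}
    (h₁ : AdjChain T m₁ p x) (h₂ : AdjChain T m₂ x q) : AdjChain T (m₁ + m₂) p q := by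
  induction m₁ generalizing p with
  | zero => rw [Nat.zero_add, show p = x from h₁]; exact h₂
  | succ m₁ ih =>
    obtain ⟨r, hr, hpr, h₁⟩ := h₁
    rw [Nat.add_right_comm]
    exact ⟨r, hr, hpr, ih h₁⟩

lemma AdjChain.snoc {T : Set (Sym2 (MbarPt n))} {m : ℕ} {p x y : Sym2 (MbarPt n)}
    (h : AdjChain T m p x) (hy : y ∈ T) (hxy : Adj x y) : AdjChain T (m + 1) p y :=
  h.append ⟨y, hy, hxy, rfl⟩

lemma AdjChain.symm {T : Set (Sym2 (MbarPt n))} {m : ℕ} {p q : Sym2 (MbarPt n)} (hp : p ∈ T)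
    (h : AdjChain T m p q) : AdjChain T m q p := by
  induction m generalizing p with
  | zero => exact (show p = q from h).symm
  | succ m ih =>
    obtain ⟨r, hr, hpr, h⟩ := h
    exact (ih hr h).snoc hp hpr.symm

lemma exists_adjChain_le_one_of_sameRot {S : Set (Sym2 (MbarPt n))} {ℓ x y : Sym2 (MbarPt n)}
    (hℓ : ℓ ∈ S) (harc : IsArc ℓ) (hs : lowSlot ℓ ≠ highSlot ℓ) (hx : SameRot x ℓ)
    (hy : SameRot y ℓ) : ∃ m ≤ 1, AdjChain (RClos S) m x y := by
  rcases hx.eq_or_adj harc hs hy with rfl | hxy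
  · exact ⟨0, zero_le_one, rfl⟩
  · exact ⟨1, le_rfl, y, ⟨ℓ, hℓ, hy⟩, hxy, rfl⟩

lemma rClos_diff_singleton_of_sameRot {S : Set (Sym2 (MbarPt n))} {ℓ ℓ' : Sym2 (MbarPt n)}
    (hℓ : ℓ ∈ S) (hne : ℓ ≠ ℓ') (h : SameRot ℓ' ℓ) : RClos (S \ {ℓ'}) = RClos S := by
  refine Set.Subset.antisymm (fun q ⟨a, ha, hqa⟩ => ⟨a, ha.1, hqa⟩) ?_
  rintro q ⟨a, ha, hqa⟩
  by_cases haℓ' : a = ℓ'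
  · subst haℓ'
    exact ⟨ℓ, ⟨hℓ, hne⟩, SameRot.trans hqa h⟩
  · exact ⟨a, ⟨ha, haℓ'⟩, hqa⟩

lemma MinimalArcSet.pairwise_not_sameRot {S : Set (Sym2 (MbarPt n))} (hmin : MinimalArcSet S)
    (hconn : ConnectedArcs S) (horb : CompleteOrbit S) :
    S.Pairwise fun ℓ ℓ' => ¬ SameRot ℓ ℓ' := by
  intro ℓ hℓ ℓ' hℓ' hne h
  have hclos := rClos_diff_singleton_of_sameRot hℓ' hne.symm h
  exact hmin ℓ hℓ ⟨by rwa [ConnectedArcs, hclos], by rwa [CompleteOrbit, hclos]⟩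

lemma exists_eq_inl_inl_of_lowSlot_eq_highSlot {ℓ : Sym2 (MbarPt n)} (hd : ¬ ℓ.IsDiag)
    (hs : lowSlot ℓ = highSlot ℓ) :
    ∃ (α β : ℤ) (i : Fin n), ℓ = s(Sum.inl (α, i), Sum.inl (β, i)) := by
  induction ℓ using Sym2.ind with
  | _ a b =>
    simp only [lowSlot_mk, highSlot_mk] at hs
    rcases a with ⟨α, i⟩ | u
    · obtain ⟨β, rfl⟩ := exists_eq_inl_of_slot_eq (by simp at hs; omega : b.slot = 2 * i.1 + 1)
      exact ⟨α, β, i, rfl⟩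
    · obtain rfl := eq_inr_of_slot_eq (by simp at hs; omega : b.slot = 2 * u.1)
      exact absurd (Sym2.mk_isDiag_iff.2 rfl) hd

lemma meetsSegment_of_adj_inl_inl {z : Sym2 (MbarPt n)} {t t' : ℤ} {i : Fin n}
    (h : Adj z s(Sum.inl (t, i), Sum.inl (t', i))) : MeetsSegment i z := by
  rcases h with h | ⟨-, u, -, hu⟩
  · have h := h.symm
    obtain ⟨a, b, hw, hab⟩ := exists_eq_mk_toCircle_lt h.not_isDiag
    have ha : a.slot = 2 * i.1 + 1 := by
      rcases Sym2.mem_iff.1 (hw ▸ Sym2.mem_mk_left a b) with rfl | rfl <;> rfl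
    have hb : b.slot = 2 * i.1 + 1 := by
      rcases Sym2.mem_iff.1 (hw ▸ Sym2.mem_mk_right a b) with rfl | rfl <;> rfl
    rw [hw] at h
    obtain ⟨z₁, z₂, rfl, h₁, h₂, -⟩ := h.exists_of_lt hab
    have := slot_le_of_toCircle_lt h₁
    have := slot_le_of_toCircle_lt h₂
    obtain ⟨k, rfl⟩ := exists_eq_inl_of_slot_eq (by omega : z₁.slot = 2 * i.1 + 1)
    exact ⟨k, Sym2.mem_mk_left _ _⟩
  · simp at hu

lemma exists_mem_leaving_segment {S : Set (Sym2 (MbarPt n))} (hconn : ConnectedArcs S)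
    (horb : CompleteOrbit S) {ℓ : Sym2 (MbarPt n)} (hℓ : ℓ ∈ S) {i : Fin n}
    (hℓi : MeetsSegment i ℓ) :
    ∃ (c : ℤ) (ξ : MbarPt n), s(Sum.inl (c, i), ξ) ∈ S ∧ ξ.slot ≠ 2 * i.1 + 1 := by
  by_contra! hall
  have hwindow : ∀ q ∈ RClos S, MeetsSegment i q →
      ∃ t t' : ℤ, q = s(Sum.inl (t, i), Sum.inl (t', i)) := by
    rintro q ⟨a, ha, m, rfl⟩ hq
    obtain ⟨k, hk⟩ := (sameRot_rotArc m a).meetsSegment_iff.1 hq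
    obtain ⟨ξ, rfl⟩ : ∃ ξ : MbarPt n, a = s(Sum.inl (k, i), ξ) := Sym2.mem_iff_exists.1 hk
    obtain ⟨k', rfl⟩ := exists_eq_inl_of_slot_eq (hall k ξ ha)
    exact ⟨k - m, k' - m, rfl⟩
  have hchain : ∀ m (r q : Sym2 (MbarPt n)), r ∈ RClos S → MeetsSegment i r →
      AdjChain (RClos S) m r q → MeetsSegment i q := by
    intro m
    induction m with
    | zero => rintro r q - hr rfl; exact hr
    | succ m ih =>
      rintro r q hrT hr ⟨r', hr'T, hrr', h⟩
      obtain ⟨t, t', rfl⟩ := hwindow r hrT hr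
      exact ih r' q hr'T (meetsSegment_of_adj_inl_inl hrr'.symm) h
  obtain ⟨p, hpT, hip⟩ := horb (Sum.inr i)
  obtain ⟨m, hm⟩ := hconn ℓ ⟨ℓ, hℓ, SameRot.refl ℓ⟩ p hpT
  obtain ⟨t, t', rfl⟩ := hwindow p hpT (hchain m ℓ p ⟨ℓ, hℓ, SameRot.refl ℓ⟩ hℓi hm)
  simp at hip

lemma mk_inl_ne_inl_inl {α β c : ℤ} {i : Fin n} {ξ : MbarPt n} (hξ : ξ.slot ≠ 2 * i.1 + 1) :
    s(Sum.inl (c, i), ξ) ≠ s(Sum.inl (α, i), Sum.inl (β, i)) := fun h => by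
  rcases Sym2.mem_iff.1 (h ▸ Sym2.mem_mk_right _ ξ) with rfl | rfl <;> exact hξ rfl

lemma completeOrbit_diff_window {S : Set (Sym2 (MbarPt n))} (horb : CompleteOrbit S)
    {α β c : ℤ} {i : Fin n} {ξ : MbarPt n} (hℓ₂ : s(Sum.inl (c, i), ξ) ∈ S)
    (hξ : ξ.slot ≠ 2 * i.1 + 1) : CompleteOrbit (S \ {s(Sum.inl (α, i), Sum.inl (β, i))}) := by
  have hℓ₂' : s(Sum.inl (c, i), ξ) ∈ S \ {s(Sum.inl (α, i), Sum.inl (β, i))} :=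
    ⟨hℓ₂, mk_inl_ne_inl_inl hξ⟩
  intro x
  obtain ⟨p, ⟨a, ha, m, rfl⟩, hx⟩ := horb x
  by_cases haℓ : a = s(Sum.inl (α, i), Sum.inl (β, i))
  · subst haℓ
    obtain ⟨t, rfl⟩ : ∃ t : ℤ, x = Sum.inl (t, i) := by
      rcases Sym2.mem_iff.1 hx with rfl | rfl
      exacts [⟨_, rfl⟩, ⟨_, rfl⟩]
    exact ⟨_, ⟨_, hℓ₂', sameRot_mk_inl c t i ξ⟩, Sym2.mem_mk_left _ _⟩
  · exact ⟨_, ⟨a, ⟨ha, haℓ⟩, m, rfl⟩, hx⟩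

lemma exists_adjChain_diff {T W : Set (Sym2 (MbarPt n))} {ℓ₂ : Sym2 (MbarPt n)}
    (hW : ∀ x ∈ T \ W, ∀ w ∈ W, Adj x w → ∃ k, AdjChain (T \ W) k x ℓ₂) {m : ℕ}
    {p q : Sym2 (MbarPt n)} (hp : p ∈ T \ W) (hq : q ∈ T \ W) (h : AdjChain T m p q) :
    ∃ k, AdjChain (T \ W) k p q := by
  suffices ∀ m (r : Sym2 (MbarPt n)), r ∈ T → AdjChain T m r q →
      (r ∉ W → ∃ k, AdjChain (T \ W) k p r) → (r ∈ W → ∃ k, AdjChain (T \ W) k p ℓ₂) →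
      ∃ k, AdjChain (T \ W) k p q from
    this m p hp.1 h (fun _ => ⟨0, rfl⟩) (fun h => absurd h hp.2)
  intro m
  induction m with
  | zero => rintro r - rfl hout -; exact hout hq.2
  | succ m ih =>
    rintro r hr ⟨r', hr', hrr', h⟩ hout hin
    refine ih r' hr' h (fun hr'W => ?_) (fun hr'W => ?_)
    · by_cases hrW : r ∈ W
      · obtain ⟨k₁, h₁⟩ := hin hrW
        obtain ⟨k₂, h₂⟩ := hW r' ⟨hr', hr'W⟩ r hrW hrr'.symm
        exact ⟨k₁ + k₂, h₁.append (h₂.symm ⟨hr', hr'W⟩)⟩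
      · obtain ⟨k, hk⟩ := hout hrW
        exact ⟨k + 1, hk.snoc ⟨hr', hr'W⟩ hrr'⟩
    · by_cases hrW : r ∈ W
      · exact hin hrW
      · obtain ⟨k₁, h₁⟩ := hout hrW
        obtain ⟨k₂, h₂⟩ := hW r ⟨hr, hrW⟩ r' hr'W hrr'
        exact ⟨k₁ + k₂, h₁.append h₂⟩

lemma connectedArcs_diff_window {S : Set (Sym2 (MbarPt n))} (harc : ∀ p ∈ S, IsArc p)
    (hconn : ConnectedArcs S) (hdup : S.Pairwise fun ℓ ℓ' => ¬ SameRot ℓ ℓ')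
    {α β c : ℤ} {i : Fin n} {ξ : MbarPt n} (hℓ : s(Sum.inl (α, i), Sum.inl (β, i)) ∈ S)
    (hℓ₂ : s(Sum.inl (c, i), ξ) ∈ S) (hξ : ξ.slot ≠ 2 * i.1 + 1) :
    ConnectedArcs (S \ {s(Sum.inl (α, i), Sum.inl (β, i))}) := by
  set ℓ : Sym2 (MbarPt n) := s(Sum.inl (α, i), Sum.inl (β, i))
  set ℓ₂ : Sym2 (MbarPt n) := s(Sum.inl (c, i), ξ)
  have hclos : RClos (S \ {ℓ}) = RClos S \ {q | SameRot q ℓ} := by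
    ext q
    refine ⟨fun ⟨a, ⟨ha, haℓ⟩, hqa⟩ => ⟨⟨a, ha, hqa⟩, fun hq => hdup ha hℓ haℓ
      (SameRot.trans (SameRot.symm hqa) hq)⟩, fun ⟨⟨a, ha, hqa⟩, hq⟩ => ⟨a, ⟨ha, ?_⟩, hqa⟩⟩
    rintro rfl
    exact hq hqa
  have hs₂ : lowSlot ℓ₂ ≠ highSlot ℓ₂ := by
    simp only [ℓ₂, lowSlot_mk, highSlot_mk, slot_inl]
    omega
  have hℓ₂' : ℓ₂ ∈ S \ {ℓ} := ⟨hℓ₂, mk_inl_ne_inl_inl hξ⟩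
  intro p hp q hq
  obtain ⟨m, hm⟩ := hconn p ((Set.ext_iff.1 hclos p).1 hp).1 q ((Set.ext_iff.1 hclos q).1 hq).1
  rw [hclos] at hp hq ⊢
  refine exists_adjChain_diff (ℓ₂ := ℓ₂) ?_ hp hq hm
  rintro x hx w ⟨k, rfl⟩ hxw
  rw [← hclos] at hx ⊢
  have hxi : MeetsSegment i x := meetsSegment_of_adj_inl_inl (t := α - k) (t' := β - k) hxw
  obtain ⟨y, hy, hxy⟩ := exists_sameRot_adj_of_meetsSegment
    (isArc_of_mem_rClos (fun p hp => harc p hp.1) hx) hxi c hξ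
  obtain ⟨m, -, hm⟩ := exists_adjChain_le_one_of_sameRot hℓ₂' (harc _ hℓ₂) hs₂ hy
    (SameRot.refl ℓ₂)
  exact ⟨m + 1, y, ⟨ℓ₂, hℓ₂', hy⟩, hxy, hm⟩

lemma MinimalArcSet.lowSlot_ne_highSlot {S : Set (Sym2 (MbarPt n))} (hmin : MinimalArcSet S)
    (harc : ∀ p ∈ S, IsArc p) (hconn : ConnectedArcs S) (horb : CompleteOrbit S)
    {ℓ : Sym2 (MbarPt n)} (hℓ : ℓ ∈ S) : lowSlot ℓ ≠ highSlot ℓ := by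
  intro hs
  obtain ⟨α, β, i, rfl⟩ := exists_eq_inl_inl_of_lowSlot_eq_highSlot (harc ℓ hℓ).1 hs
  obtain ⟨c, ξ, hℓ₂, hξ⟩ := exists_mem_leaving_segment hconn horb hℓ ⟨α, Sym2.mem_mk_left _ _⟩
  exact hmin _ hℓ ⟨connectedArcs_diff_window harc hconn
    (hmin.pairwise_not_sameRot hconn horb) hℓ hℓ₂ hξ,
    completeOrbit_diff_window horb hℓ₂ hξ⟩

def orbitGraph (S : Set (Sym2 (MbarPt n))) : SimpleGraph (Sym2 (MbarPt n)) where
  Adj a b := a ∈ S ∧ b ∈ S ∧ a ≠ b ∧ SlotLinked a b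
  symm := ⟨fun _ _ h => ⟨h.2.1, h.1, h.2.2.1.symm, h.2.2.2.symm⟩⟩
  loopless := ⟨fun _ h => h.2.2.1 rfl⟩

@[simp] lemma orbitGraph_adj {S : Set (Sym2 (MbarPt n))} {a b : Sym2 (MbarPt n)} :
    (orbitGraph S).Adj a b ↔ a ∈ S ∧ b ∈ S ∧ a ≠ b ∧ SlotLinked a b :=
  Iff.rfl

lemma SimpleGraph.Walk.getVert_mem_of_orbitGraph {S : Set (Sym2 (MbarPt n))}
    {a b : Sym2 (MbarPt n)} (w : (orbitGraph S).Walk a b) (ha : a ∈ S) (t : ℕ) :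
    w.getVert t ∈ S := by
  induction w generalizing t with
  | nil => exact ha
  | cons h w ih =>
    cases t with
    | zero => exact ha
    | succ t => exact ih (orbitGraph_adj.1 h).2.1 t

lemma orbitGraph_reachable {S : Set (Sym2 (MbarPt n))} (harc : ∀ p ∈ S, IsArc p)
    (hdup : S.Pairwise fun ℓ ℓ' => ¬ SameRot ℓ ℓ') {m : ℕ} {p q a b : Sym2 (MbarPt n)}
    (ha : a ∈ S) (hb : b ∈ S) (hp : SameRot p a) (hq : SameRot q b)
    (h : AdjChain (RClos S) m p q) : (orbitGraph S).Reachable a b := by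
  induction m generalizing p a with
  | zero =>
    obtain rfl : p = q := h
    by_contra hab
    exact hdup ha hb (fun h => hab (h ▸ SimpleGraph.Reachable.refl _)) (hp.symm.trans hq)
  | succ m ih =>
    obtain ⟨r, ⟨c, hc, hrc : SameRot r c⟩, hpr, h⟩ := h
    refine SimpleGraph.Reachable.trans ?_ (ih hc hrc h)
    by_cases hac : a = c
    · exact hac ▸ SimpleGraph.Reachable.refl _
    refine SimpleGraph.Adj.reachable (orbitGraph_adj.2 ⟨ha, hc, hac, ?_⟩)
    exact (slotLinked_congr hp.lowSlot_eq hp.highSlot_eq hrc.lowSlot_eq hrc.highSlot_eq).1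
      (hpr.slotLinked ((harc a ha).of_sameRot hp).1)

lemma exists_adjChain_of_walk {S : Set (Sym2 (MbarPt n))} (harc : ∀ p ∈ S, IsArc p)
    (hwin : ∀ ℓ ∈ S, lowSlot ℓ ≠ highSlot ℓ)
    (hdup : S.Pairwise fun ℓ ℓ' => ¬ SameRot ℓ ℓ') {a b : Sym2 (MbarPt n)}
    (w : (orbitGraph S).Walk a b) {x : Sym2 (MbarPt n)} (hx : SameRot x a) :
    ∃ y, SameRot y b ∧ AdjChain (RClos S) w.length x y := by
  induction w generalizing x with
  | nil => exact ⟨x, hx, rfl⟩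
  | cons h w ih =>
    obtain ⟨ha, hc, hac, hlink⟩ := orbitGraph_adj.1 h
    obtain ⟨y₁, hy₁, hxy₁⟩ := exists_sameRot_adj_of_slotLinked (harc _ ha) (harc _ hc)
      (hwin _ hc) (hdup ha hc hac) hlink hx
    obtain ⟨y, hy, h⟩ := ih hy₁
    exact ⟨y, hy, y₁, ⟨_, hc, hy₁⟩, hxy₁, h⟩

lemma SimpleGraph.Walk.not_adj_getVert_of_length_eq_dist {V : Type*} {G : SimpleGraph V}
    {u v : V} (w : G.Walk u v) (hw : w.length = G.dist u v) {i j : ℕ} (hij : i + 2 ≤ j)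
    (hj : j ≤ w.length) : ¬ G.Adj (w.getVert i) (w.getVert j) := fun h => by
  have := SimpleGraph.dist_le ((w.take i).append (.cons h (w.drop j)))
  simp only [SimpleGraph.Walk.length_append, SimpleGraph.Walk.take_length,
    SimpleGraph.Walk.length_cons, SimpleGraph.Walk.drop_length] at this
  omega

def slotPair (p : Sym2 (MbarPt n)) : Finset ℕ := {lowSlot p, highSlot p}

lemma card_slotPair {p : Sym2 (MbarPt n)} (h : lowSlot p ≠ highSlot p) : (slotPair p).card = 2 :=
  Finset.card_pair_eq_two_iff.2 h

lemma disjoint_slotPair {p q : Sym2 (MbarPt n)} (h : ¬ SlotLinked p q) :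
    Disjoint (slotPair p) (slotPair q) := by
  rw [Finset.disjoint_left]
  intro x hp hq
  simp only [slotPair, Finset.mem_insert, Finset.mem_singleton] at hp hq
  exact h (Or.inl (sharesSlot_iff.2 (by omega)))

lemma card_biUnion_slotPair {f : ℕ → Sym2 (MbarPt n)} {d : ℕ}
    (hwin : ∀ t ≤ d, lowSlot (f t) ≠ highSlot (f t))
    (hchord : ∀ t t', t + 2 ≤ t' → t' ≤ d → ¬ SlotLinked (f t) (f t')) {k r : ℕ}
    (hkd : 2 * (k - 1) + r ≤ d) :
    (((Finset.range k).image fun j => 2 * j + r).biUnion fun t => slotPair (f t)).card =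
      2 * k := by
  have hinj : Set.InjOn (fun j => 2 * j + r) (Finset.range k) := fun j _ j' _ h => by
    simp only at h; omega
  rw [Finset.card_biUnion, Finset.sum_image hinj, Finset.sum_congr rfl fun j hj =>
    card_slotPair (hwin _ (by simp at hj; omega)), Finset.sum_const,
    Finset.card_range, smul_eq_mul, mul_comm]
  simp only [Finset.coe_image, Finset.coe_range]
  rintro _ ⟨j, hj, rfl⟩ _ ⟨j', hj', rfl⟩ hne
  simp only [Set.mem_Iio] at hj hj'
  rcases Nat.lt_or_gt_of_ne (fun h : j = j' => hne (by rw [h])) with h | h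
  · exact disjoint_slotPair (hchord (2 * j + r) (2 * j' + r) (by omega) (by omega))
  · exact (disjoint_slotPair (hchord (2 * j' + r) (2 * j + r) (by omega) (by omega))).symm

lemma slotPair_subset_range (p : Sym2 (MbarPt n)) : slotPair p ⊆ Finset.range (2 * n) := by
  intro x hx
  simp only [slotPair, Finset.mem_insert, Finset.mem_singleton] at hx
  have := highSlot_lt p
  have := lowSlot_le_highSlot p
  rw [Finset.mem_range]
  omega

/-- The slot pairs at even positions are disjoint, so `d ≤ 2n - 1`; if `d = 2n - 1`, those at odd
positions use up all `2n` slots, which forces `slotPair (f 0) = slotPair (f 1)` and hence the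
chord `f 0 — f 2`. -/
lemma le_two_mul_sub_two_of_chordless (hn : 2 ≤ n) {f : ℕ → Sym2 (MbarPt n)} {d : ℕ}
    (hwin : ∀ t ≤ d, lowSlot (f t) ≠ highSlot (f t))
    (hlink : ∀ t < d, SlotLinked (f t) (f (t + 1)))
    (hchord : ∀ t t', t + 2 ≤ t' → t' ≤ d → ¬ SlotLinked (f t) (f t')) : d ≤ 2 * n - 2 := by
  have hsub : ∀ I : Finset ℕ, (I.biUnion fun t => slotPair (f t)) ⊆ Finset.range (2 * n) :=
    fun I => Finset.biUnion_subset.2 fun t _ => slotPair_subset_range (f t)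
  have hle : d ≤ 2 * n - 1 := by
    by_contra! h
    have := Finset.card_le_card (hsub ((Finset.range (n + 1)).image fun j => 2 * j + 0))
    rw [card_biUnion_slotPair hwin hchord (by omega), Finset.card_range] at this
    omega
  refine Nat.le_of_lt_succ (lt_of_le_of_ne (by omega) fun hd => ?_)
  have hcover := Finset.eq_of_subset_of_card_le (hsub ((Finset.range n).image fun j => 2 * j + 1))
    (by rw [card_biUnion_slotPair hwin hchord (by omega), Finset.card_range])
  have hmem₁ : ∀ x ∈ slotPair (f 0), x ∈ slotPair (f 1) := by
    intro x hx
    obtain ⟨t, ht, hxt⟩ := Finset.mem_biUnion.1 (hcover ▸ slotPair_subset_range (f 0) hx)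
    obtain ⟨j, hj, rfl⟩ := Finset.mem_image.1 ht
    rcases Nat.eq_zero_or_pos j with rfl | hj₀
    · exact hxt
    · rw [Finset.mem_range] at hj
      exact absurd hxt (Finset.disjoint_left.1
        (disjoint_slotPair (hchord 0 _ (by omega) (by omega))) hx)
  have hlow := hmem₁ _ (Finset.mem_insert_self _ _)
  have hhigh := hmem₁ _ (Finset.mem_insert_of_mem (Finset.mem_singleton_self _))
  simp only [slotPair, Finset.mem_insert, Finset.mem_singleton] at hlow hhigh
  have := hwin 0 (by omega)
  have := hwin 1 (by omega)
  have := lowSlot_le_highSlot (f 0)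
  have := lowSlot_le_highSlot (f 1)
  exact hchord 0 2 le_rfl (by omega) ((slotLinked_congr (by omega) (by omega) rfl rfl).2
    (hlink 1 (by omega)))

lemma sharesSlot_of_meetsSegment {i : Fin n} {p q : Sym2 (MbarPt n)} (hp : MeetsSegment i p)
    (hq : MeetsSegment i q) : SharesSlot p q :=
  let ⟨_, hk⟩ := hp
  let ⟨_, hc⟩ := hq
  ⟨_, hk, _, hc, rfl⟩

/-- Consecutive non-rigid links of a chordless path share segments, and these are distinct. -/
lemma le_of_chordless_of_not_isRigidPair {f : ℕ → Sym2 (MbarPt n)} {d : ℕ}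
    (hlink : ∀ t < d, SlotLinked (f t) (f (t + 1)))
    (hrigid : ∀ t < d, ¬ IsRigidPair (f t) (f (t + 1)))
    (hchord : ∀ t t', t + 2 ≤ t' → t' ≤ d → ¬ SlotLinked (f t) (f t')) : d ≤ n := by
  choose σ hσ using fun t : Fin d =>
    exists_meetsSegment_of_not_isRigidPair (hlink t t.2) (hrigid t t.2)
  have hσ : Function.Injective σ := by
    intro t t' h
    by_contra hne
    wlog hlt : t < t' generalizing t t'
    · exact this h.symm (Ne.symm hne) (lt_of_le_of_ne (not_lt.1 hlt) (Ne.symm hne))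
    have := t'.2
    exact hchord t (t' + 1) (by rw [Fin.lt_def] at hlt; omega) (by omega)
      (Or.inl (sharesSlot_of_meetsSegment (hσ t).1 (h ▸ (hσ t').2)))
  simpa using Fintype.card_le_of_injective σ hσ

/-- `hside` says that `(r, i)` lies on the side of `(α, i)` facing `e` exactly when `z` lies
outside the arc from `(α, i)` to `e`. -/
lemma crosses_inl_of_side {α r : ℤ} {i : Fin n} {e z : MbarPt n} (he : e.slot ≠ 2 * i.1 + 1)
    (hzi : z.slot ≠ 2 * i.1 + 1) (hze : z.slot ≠ e.slot) (hr : α ≠ r)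
    (hside : (α < r ↔ 2 * i.1 + 1 < e.slot) ↔
      ¬ (min (2 * i.1 + 1) e.slot < z.slot ∧ z.slot < max (2 * i.1 + 1) e.slot)) :
    Crosses s(Sum.inl (α, i), e) s(Sum.inl (r, i), z) := by
  have hlt : ∀ {β γ : ℤ}, β < γ → toCircle (Sum.inl (β, i) : MbarPt n) <
      toCircle (Sum.inl (γ, i) : MbarPt n) := fun h => toCircle_inl_lt_inl_iff.2 h
  have hslot : ∀ {β : ℤ}, e.slot < 2 * i.1 + 1 → toCircle e < toCircle (Sum.inl (β, i)) :=
    fun h => toCircle_lt_of_slot_lt (by simpa using h)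
  have hslot' : ∀ {β : ℤ}, 2 * i.1 + 1 < e.slot → toCircle (Sum.inl (β, i)) < toCircle e :=
    fun h => toCircle_lt_of_slot_lt (by simpa using h)
  by_cases hz : min (2 * i.1 + 1) e.slot < z.slot ∧ z.slot < max (2 * i.1 + 1) e.slot
  · rw [Sym2.eq_swap (a := (Sum.inl (r, i) : MbarPt n))]
    refine crosses_of_mem_uIoo (toCircle_mem_uIoo_of_slot (by simpa using hz.1)
      (by simpa using hz.2)) ?_
    rcases Nat.lt_or_gt_of_ne he with h | h
    · have hαr : α < r := by
        have : ¬ 2 * i.1 + 1 < e.slot := by omega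
        tauto
      exact Set.notMem_uIcc_of_gt (hlt hαr) ((hslot h).trans (hlt hαr))
    · have hrα : r < α := by
        have : ¬ α < r := by tauto
        omega
      exact Set.notMem_uIcc_of_lt (hlt hrα) ((hlt hrα).trans (hslot' h))
  · refine crosses_of_mem_uIoo ?_ (toCircle_notMem_uIcc_of_slot (by simp only [slot_inl]; omega))
    rcases Nat.lt_or_gt_of_ne he with h | h
    · have hrα : r < α := by
        have : ¬ 2 * i.1 + 1 < e.slot := by omega
        have : ¬ α < r := by tauto
        omega
      exact Set.mem_uIoo_of_gt (hslot h) (hlt hrα)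
    · have hαr : α < r := by tauto
      exact Set.mem_uIoo_of_lt (hlt hαr) (hslot' h)

lemma exists_sameRot_adj_adj_of_eq_two (hn : n = 2) {k₀ c₀ k₁ c₁ : ℤ} {s₀ s₁ u u' : Fin n}
    (hs : s₀ ≠ s₁) (hu : u ≠ u') {p q : Sym2 (MbarPt n)}
    (hp : SameRot p s(Sum.inl (k₀, s₀), Sum.inr u))
    (hq : SameRot q s(Sum.inl (c₁, s₁), Sum.inr u')) :
    ∃ y, SameRot y s(Sum.inl (c₀, s₀), Sum.inl (k₁, s₁)) ∧ Adj p y ∧ Adj y q := by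
  obtain ⟨tp, rfl⟩ := exists_eq_of_sameRot_inl_inr hp
  obtain ⟨tq, rfl⟩ := exists_eq_of_sameRot_inl_inr hq
  have := Fin.val_ne_of_ne hs
  have := Fin.val_ne_of_ne hu
  have := s₀.2; have := s₁.2; have := u.2; have := u'.2
  set B := 2 * s₀.1 + 1 < 2 * u.1 ↔
    ¬ (min (2 * s₀.1 + 1) (2 * u.1) < 2 * s₁.1 + 1 ∧ 2 * s₁.1 + 1 < max (2 * s₀.1 + 1) (2 * u.1))
  -- For `n = 2` both crossings ask for `r` on the same side, so `r` can be taken far away.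
  have hB : B ↔ (2 * s₁.1 + 1 < 2 * u'.1 ↔ ¬ (min (2 * s₁.1 + 1) (2 * u'.1) < 2 * s₀.1 + 1 ∧
      2 * s₀.1 + 1 < max (2 * s₁.1 + 1) (2 * u'.1))) := by
    simp only [B]
    omega
  obtain ⟨r, hr₁, hr₂, hr₃, hr₄⟩ : ∃ r : ℤ, tp ≠ r ∧ (tp < r ↔ B) ∧ tq ≠ k₁ - (c₀ - r) ∧
      (tq < k₁ - (c₀ - r) ↔ B) := by
    by_cases hB' : B
    · exact ⟨max (tp + 1) (tq - k₁ + c₀ + 1), by omega, iff_of_true (by omega) hB', by omega,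
        iff_of_true (by omega) hB'⟩
    · exact ⟨min (tp - 1) (tq - k₁ + c₀ - 1), by omega, iff_of_false (by omega) hB', by omega,
        iff_of_false (by omega) hB'⟩
  refine ⟨_, sameRot_mk_inl c₀ r s₀ (Sum.inl (k₁, s₁)), Or.inl ?_, Or.inl ?_⟩
  · exact crosses_inl_of_side (by simp; omega) (by simp; omega) (by simp; omega) hr₁
      (by simpa only [slot_inl, slot_inr, slot_rotPt] using iff_assoc.2 hr₂)
  · rw [rotPt_inl, Sym2.eq_swap]
    exact (crosses_inl_of_side (by simp; omega) (by simp; omega) (by simp; omega) hr₃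
      (by simpa only [slot_inl, slot_inr] using iff_assoc.2 (hr₄.trans hB))).symm

lemma exists_eq_inl_inr_of_eq_two (hn : n = 2) {f : Sym2 (MbarPt n)} {k : ℤ} {s s' : Fin n}
    (hss' : s ≠ s') (hk : Sum.inl (k, s) ∈ f) (hf : lowSlot f ≠ highSlot f)
    (hs' : ¬ MeetsSegment s' f) : ∃ u, f = s(Sum.inl (k, s), Sum.inr u) := by
  obtain ⟨e, rfl⟩ : ∃ e : MbarPt n, f = s(Sum.inl (k, s), e) := Sym2.mem_iff_exists.1 hk
  rcases e with ⟨b, j⟩ | u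
  · exfalso
    rcases eq_or_ne j s with rfl | hjs
    · simp at hf
    · have := Fin.val_ne_of_ne hss'
      have := Fin.val_ne_of_ne hjs
      have := s.2; have := s'.2; have := j.2
      obtain rfl : j = s' := Fin.ext (by omega)
      exact hs' ⟨b, Sym2.mem_mk_right _ _⟩
  · exact ⟨u, rfl⟩

lemma adjChain_two_of_eq_two (hn : n = 2) {S : Set (Sym2 (MbarPt n))}
    {f₀ f₁ f₂ p q : Sym2 (MbarPt n)}
    (hf₀ : lowSlot f₀ ≠ highSlot f₀) (hf₁ : f₁ ∈ S) (hf₂ : lowSlot f₂ ≠ highSlot f₂)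
    (h₀₁ : SlotLinked f₀ f₁) (h₁₂ : SlotLinked f₁ f₂) (hr₀₁ : ¬ IsRigidPair f₀ f₁)
    (hr₁₂ : ¬ IsRigidPair f₁ f₂) (h₀₂ : ¬ SlotLinked f₀ f₂) (hp : SameRot p f₀)
    (hq : SameRot q f₂) (hqS : q ∈ RClos S) : AdjChain (RClos S) 2 p q := by
  obtain ⟨s₀, ⟨k₀, hk₀⟩, ⟨c₀, hc₀⟩⟩ := exists_meetsSegment_of_not_isRigidPair h₀₁ hr₀₁
  obtain ⟨s₁, ⟨k₁, hk₁⟩, ⟨c₁, hc₁⟩⟩ := exists_meetsSegment_of_not_isRigidPair h₁₂ hr₁₂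
  have hs : s₀ ≠ s₁ := by
    rintro rfl
    exact h₀₂ (Or.inl (sharesSlot_of_meetsSegment ⟨k₀, hk₀⟩ ⟨c₁, hc₁⟩))
  have h₁ : f₁ = s(Sum.inl (c₀, s₀), Sum.inl (k₁, s₁)) :=
    (Sym2.mem_and_mem_iff (by simp [hs])).1 ⟨hc₀, hk₁⟩
  obtain ⟨u, rfl⟩ := exists_eq_inl_inr_of_eq_two hn hs hk₀ hf₀ fun h =>
    h₀₂ (Or.inl (sharesSlot_of_meetsSegment h ⟨c₁, hc₁⟩))
  obtain ⟨u', rfl⟩ := exists_eq_inl_inr_of_eq_two hn hs.symm hc₁ hf₂ fun h =>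
    h₀₂ (Or.inl (sharesSlot_of_meetsSegment ⟨k₀, hk₀⟩ h))
  have hu : u ≠ u' := by
    rintro rfl
    exact h₀₂ (Or.inl ⟨_, Sym2.mem_mk_right _ _, _, Sym2.mem_mk_right _ _, rfl⟩)
  obtain ⟨y, hy, hpy, hyq⟩ := exists_sameRot_adj_adj_of_eq_two hn (c₀ := c₀) (k₁ := k₁) hs hu hp hq
  exact ⟨y, ⟨f₁, hf₁, h₁ ▸ hy⟩, hpy, q, hqS, hyq, rfl⟩

lemma adjChain_of_isRigidPair {S : Set (Sym2 (MbarPt n))} (harc : ∀ p ∈ S, IsArc p)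
    (hwin : ∀ ℓ ∈ S, lowSlot ℓ ≠ highSlot ℓ)
    (hdup : S.Pairwise fun ℓ ℓ' => ¬ SameRot ℓ ℓ') {a b : Sym2 (MbarPt n)}
    (w : (orbitGraph S).Walk a b) {p q : Sym2 (MbarPt n)} (hp : SameRot p a)
    (hq : SameRot q b) (hqS : q ∈ RClos S) {t : ℕ} (ht : t < w.length)
    (hrigid : IsRigidPair (w.getVert t) (w.getVert (t + 1))) :
    AdjChain (RClos S) w.length p q := by
  obtain ⟨ht₀, ht₁, hne, -⟩ := orbitGraph_adj.1 (w.adj_getVert_succ ht)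
  obtain ⟨x, hx, hpx⟩ := exists_adjChain_of_walk harc hwin hdup (w.take t) hp
  obtain ⟨y, hy, hqy⟩ := exists_adjChain_of_walk harc hwin hdup (w.drop (t + 1)).reverse hq
  have hxy : Adj x y :=
    adj_of_isRigidPair (harc _ ht₀) (harc _ ht₁) (hdup ht₀ ht₁ hne) hrigid hx hy
  have := hpx.append ((hqy.snoc ⟨_, ht₀, hx⟩ hxy.symm).symm hqS)
  simp only [SimpleGraph.Walk.take_length, SimpleGraph.Walk.length_reverse,
    SimpleGraph.Walk.drop_length] at this
  rwa [show min t w.length + (w.length - (t + 1) + 1) = w.length by omega] at this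

lemma exists_adjChain_le_of_length_eq_dist (hn : 2 ≤ n) {S : Set (Sym2 (MbarPt n))}
    (harc : ∀ p ∈ S, IsArc p) (hwin : ∀ ℓ ∈ S, lowSlot ℓ ≠ highSlot ℓ)
    (hdup : S.Pairwise fun ℓ ℓ' => ¬ SameRot ℓ ℓ') {a b : Sym2 (MbarPt n)} (ha : a ∈ S)
    (w : (orbitGraph S).Walk a b) (hw : w.length = (orbitGraph S).dist a b)
    {p q : Sym2 (MbarPt n)} (hp : SameRot p a) (hq : SameRot q b) (hqS : q ∈ RClos S) :
    ∃ m ≤ 2 * n - 2, AdjChain (RClos S) m p q := by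
  set f := w.getVert
  have hfS : ∀ t, f t ∈ S := w.getVert_mem_of_orbitGraph ha
  have hlink : ∀ t < w.length, SlotLinked (f t) (f (t + 1)) := fun t ht =>
    (orbitGraph_adj.1 (w.adj_getVert_succ ht)).2.2.2
  have hchord : ∀ t t', t + 2 ≤ t' → t' ≤ w.length → ¬ SlotLinked (f t) (f t') := by
    intro t t' htt' ht' hlink
    refine w.not_adj_getVert_of_length_eq_dist hw htt' ht' ⟨hfS t, hfS t', fun h => ?_, hlink⟩
    have := (w.isPath_of_length_eq_dist hw).getVert_injOn (by simp; omega) (by simp; omega) h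
    omega
  have hb : b ∈ S := by rw [← w.getVert_length]; exact hfS _
  have hd := le_two_mul_sub_two_of_chordless hn (fun t _ => hwin _ (hfS t)) hlink hchord
  rcases hd.lt_or_eq with hd | hd
  · obtain ⟨y, hy, hpy⟩ := exists_adjChain_of_walk harc hwin hdup w hp
    obtain ⟨k, hk, hyq⟩ := exists_adjChain_le_one_of_sameRot hb (harc b hb) (hwin b hb) hy hq
    exact ⟨_, by omega, hpy.append hyq⟩
  by_cases hrigid : ∃ t < w.length, IsRigidPair (f t) (f (t + 1))
  · obtain ⟨t, ht, hrigid⟩ := hrigid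
    exact ⟨_, hd.le, adjChain_of_isRigidPair harc hwin hdup w hp hq hqS ht hrigid⟩
  simp only [not_exists, not_and] at hrigid
  have := le_of_chordless_of_not_isRigidPair hlink hrigid hchord
  have hn₂ : n = 2 := by omega
  have hf₀ : f 0 = a := w.getVert_zero
  have hf₂ : f 2 = b := (show w.length = 2 by omega) ▸ w.getVert_length
  refine ⟨2, by omega, adjChain_two_of_eq_two hn₂ (hwin _ (hfS 0)) (hfS 1) (hwin _ (hfS 2))
    (hlink 0 (by omega)) (hlink 1 (by omega)) (hrigid 0 (by omega)) (hrigid 1 (by omega))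
    (hchord 0 2 le_rfl (by omega)) (hf₀ ▸ hp) (hf₂ ▸ hq) hqS⟩

end

/-- Theorem 5.15 of the paper: for `n ≥ 2`, every finite set `S` of arcs
of `M̄ₙ` which is connected, has complete orbit and is minimal has homological length at
most `2n - 2`. Equivalently, no minimal strong generator of the Paquette–Yıldırım
category `C̄ₙ` has homological length greater than `2n - 2`, whence the Orlov spectrum of
`C̄ₙ` is contained in `{1, …, 2n - 2}`. -/
theorem homological_length_le_of_minimal_generator (n : ℕ) (hn : 2 ≤ n)
    (S : Finset (Sym2 (MbarPt n)))
    (harc : ∀ p ∈ S, IsArc p)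
    (hconn : ConnectedArcs (↑S : Set (Sym2 (MbarPt n))))
    (horb : CompleteOrbit (↑S : Set (Sym2 (MbarPt n))))
    (hmin : MinimalArcSet (↑S : Set (Sym2 (MbarPt n)))) :
    HLenLE (↑S : Set (Sym2 (MbarPt n))) (2 * n - 2) := by
  have hdup := hmin.pairwise_not_sameRot hconn horb
  have hwin : ∀ ℓ ∈ (S : Set (Sym2 (MbarPt n))), lowSlot ℓ ≠ highSlot ℓ := fun _ hℓ =>
    hmin.lowSlot_ne_highSlot harc hconn horb hℓ
  rintro p ⟨a, ha, hp⟩ q ⟨b, hb, hq⟩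
  obtain ⟨m, hm⟩ := hconn p ⟨a, ha, hp⟩ q ⟨b, hb, hq⟩
  obtain ⟨w, hw⟩ := (orbitGraph_reachable harc hdup ha hb hp hq hm).exists_walk_length_eq_dist
  exact exists_adjChain_le_of_length_eq_dist hn harc hwin hdup ha w hw hp hq ⟨b, hb, hq⟩
end
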